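/- arXiv:2102.09143 — 11 statements merged into one kernel-verified Lean document; each statement's English description precedes it below -/
import Mathlib

section
/- Let A be a ℚ-algebra. Let u, v, s be central elements of A with s invertible and s² = u² + v², and let σ, θ ∈ A be odd elements: σ² = θ² = 0 and σθ = −θσ. Define σ′ = (σu − θv)·s⁻¹ and θ′ = (θu + σv)·s⁻¹. Then σ′θ′ = σθ. -/
/-- Let `A` be a `ℚ`-algebra, `u v s` central elements with `s`
invertible and `s² = u² + v²`, and `σ θ` odd elements (`σ² = θ² = 0`, `σθ = -θσ`).
With `σ' = (σu - θv)·s⁻¹` and `θ' = (θu + σv)·s⁻¹`, one has `σ'θ' = σθ`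
(equation (2.4) of Penner–Zeitlin; "σθ = σ'θ'"). -/
theorem super_ptolemy_mu_product_invariant
    (A : Type*) [Ring A] [Algebra ℚ A]
    (u v s σ θ : A) [Invertible s]
    (hu : ∀ x : A, u * x = x * u)
    (hv : ∀ x : A, v * x = x * v)
    (hs : ∀ x : A, s * x = x * s)
    (hs2 : s * s = u * u + v * v)
    (hσ : σ * σ = 0) (hθ : θ * θ = 0)
    (hσθ : σ * θ = -(θ * σ)) :
    ((σ * u - θ * v) * ⅟ s) * ((θ * u + σ * v) * ⅟ s) = σ * θ := by
  have hinv : ∀ x : A, ⅟ s * x = x * ⅟ s := by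
    intro x
    have h1 : ⅟ s * (s * x) * ⅟ s = x * ⅟ s := by
      rw [← mul_assoc, invOf_mul_self, one_mul]
    rw [← h1, hs x, ← mul_assoc, mul_assoc (⅟ s * x) s (⅟ s),
      mul_invOf_self, mul_one]
  have key : (σ * u - θ * v) * (θ * u + σ * v) = σ * θ * (s * s) := by
    have hθσ : θ * σ = -(σ * θ) := by rw [hσθ, neg_neg]
    calc (σ * u - θ * v) * (θ * u + σ * v)
        = (σ * θ) * (u * u) + (σ * σ) * (u * v)
          - (θ * θ) * (u * v) - (θ * σ) * (v * v) := by
          rw [sub_mul, mul_add, mul_add]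
          rw [show σ * u * (θ * u) = σ * θ * (u * u) by
            rw [mul_assoc, ← mul_assoc u θ u, hu θ, mul_assoc, ← mul_assoc, ← mul_assoc]]
          rw [show σ * u * (σ * v) = σ * σ * (u * v) by
            rw [mul_assoc, ← mul_assoc u σ v, hu σ, mul_assoc, ← mul_assoc, ← mul_assoc]]
          rw [show θ * v * (θ * u) = θ * θ * (v * u) by
            rw [mul_assoc, ← mul_assoc v θ u, hv θ, mul_assoc, ← mul_assoc, ← mul_assoc]]
          rw [show θ * v * (σ * v) = θ * σ * (v * v) by
            rw [mul_assoc, ← mul_assoc v σ v, hv σ, mul_assoc, ← mul_assoc, ← mul_assoc]]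
          rw [hv u]
          noncomm_ring
      _ = σ * θ * (s * s) := by rw [hσ, hθ, hθσ, hs2]; noncomm_ring
  calc ((σ * u - θ * v) * ⅟ s) * ((θ * u + σ * v) * ⅟ s)
      = (σ * u - θ * v) * (θ * u + σ * v) * (⅟ s * ⅟ s) := by
        rw [mul_assoc, ← mul_assoc (⅟ s), hinv, mul_assoc, ← mul_assoc]
    _ = σ * θ * (s * s) * (⅟ s * ⅟ s) := by rw [key]
    _ = σ * θ := by
        rw [mul_assoc (σ * θ), mul_assoc s s (⅟ s * ⅟ s), ← mul_assoc s (⅟ s),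
          mul_invOf_self, one_mul, mul_invOf_self, mul_one]
end

section
/- Let A be a ℚ-algebra. Let u, v, s be central elements of A with s and 2 invertible and s² = u² + v², and let σ, θ ∈ A be odd elements: σ² = θ² = 0 and σθ = −θσ. Define σ′ = (σu − θv)·s⁻¹, θ′ = (θu + σv)·s⁻¹, and F = s + (2s)⁻¹·u·v·σθ. Then F² = s² + u·v·σθ (so F is a square root of the flipped product e·f = ac + bd + √(abcd)σθ), and moreover θ′·F = θ·u + σ·v and σ′·F = σ·u − θ·v. -/
/-- Symmetric form of the super Ptolemy relations
(equations (5.1)–(5.2) of the paper).  Here `u` stands for `√(bd)`, `v` for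
`√(ac)`, `s` for `√(ac+bd)`, and
`F = s + (2s)⁻¹·u·v·σθ` is the distinguished square root of the flipped
product `e·f = ac + bd + √(abcd)σθ`.  Then `F² = s² + u·v·σθ`, and
`θ'·F = θu + σv`, `σ'·F = σu - θv`. -/
theorem super_ptolemy_symmetric_form
    (A : Type*) [Ring A] [Algebra ℚ A]
    (u v s σ θ : A) [Invertible s]
    (hu : ∀ x : A, u * x = x * u)
    (hv : ∀ x : A, v * x = x * v)
    (hs : ∀ x : A, s * x = x * s)
    (hs2 : s * s = u * u + v * v)
    (hσ : σ * σ = 0) (hθ : θ * θ = 0)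
    (hσθ : σ * θ = -(θ * σ)) :
    (s + (2 : ℚ)⁻¹ • (⅟ s * (u * v * (σ * θ)))) *
        (s + (2 : ℚ)⁻¹ • (⅟ s * (u * v * (σ * θ))))
      = s * s + u * v * (σ * θ)
    ∧ ((θ * u + σ * v) * ⅟ s) * (s + (2 : ℚ)⁻¹ • (⅟ s * (u * v * (σ * θ))))
      = θ * u + σ * v
    ∧ ((σ * u - θ * v) * ⅟ s) * (s + (2 : ℚ)⁻¹ • (⅟ s * (u * v * (σ * θ))))
      = σ * u - θ * v := by
  have hinv : ∀ x : A, ⅟ s * x = x * ⅟ s := by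
    intro x
    calc ⅟ s * x = ⅟ s * (x * s) * ⅟ s := by
          rw [mul_assoc, mul_assoc, mul_invOf_self, mul_one]
      _ = ⅟ s * (s * x) * ⅟ s := by rw [hs]
      _ = x * ⅟ s := by rw [← mul_assoc, invOf_mul_self, one_mul]
  have hθσ : θ * σ = -(σ * θ) := by rw [hσθ, neg_neg]
  have hw : σ * θ * (σ * θ) = 0 := by
    calc σ * θ * (σ * θ) = σ * (θ * σ) * θ := by noncomm_ring
      _ = 0 := by rw [hθσ]; simp [← mul_assoc, hσ]
  have hθw : θ * (σ * θ) = 0 := by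
    rw [← mul_assoc, hθσ]; simp [mul_assoc, hθ]
  have hσw : σ * (σ * θ) = 0 := by rw [← mul_assoc, hσ, zero_mul]
  have huv : ∀ x : A, (u * v) * x = x * (u * v) := fun x => by
    rw [mul_assoc, hv, ← mul_assoc, hu, mul_assoc]
  have hc : ∀ x : A, (⅟ s * (u * v)) * x = x * (⅟ s * (u * v)) := fun x => by
    rw [mul_assoc, huv, ← mul_assoc, hinv, mul_assoc]
  have hre : ⅟ s * (u * v * (σ * θ)) = (⅟ s * (u * v)) * (σ * θ) :=
    (mul_assoc _ _ _).symm
  have key : ∀ a : A, a * (σ * θ) = 0 →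
      a * (⅟ s * (u * v * (σ * θ))) = 0 := by
    intro a ha
    rw [hre, hc, ← mul_assoc, ha, zero_mul]
  have h3 : (⅟ s * (u * v * (σ * θ))) * (⅟ s * (u * v * (σ * θ))) = 0 := by
    have hz : (⅟ s * (u * v * (σ * θ))) * (σ * θ) = 0 := by
      rw [hre, mul_assoc, hw, mul_zero]
    exact key _ hz
  have hθu : (θ * u + σ * v) * (σ * θ) = 0 := by
    rw [add_mul, mul_assoc, hu (σ * θ), ← mul_assoc, hθw, zero_mul,
      mul_assoc, hv (σ * θ), ← mul_assoc, hσw, zero_mul, add_zero]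
  have hσu : (σ * u - θ * v) * (σ * θ) = 0 := by
    rw [sub_mul, mul_assoc, hu (σ * θ), ← mul_assoc, hσw, zero_mul,
      mul_assoc, hv (σ * θ), ← mul_assoc, hθw, zero_mul, sub_zero]
  refine ⟨?_, ?_, ?_⟩
  · have expand :
      (s + (2 : ℚ)⁻¹ • (⅟ s * (u * v * (σ * θ)))) *
        (s + (2 : ℚ)⁻¹ • (⅟ s * (u * v * (σ * θ))))
      = s * s + (2 : ℚ)⁻¹ • (s * (⅟ s * (u * v * (σ * θ))))
        + (2 : ℚ)⁻¹ • ((⅟ s * (u * v * (σ * θ))) * s)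
        + (2 : ℚ)⁻¹ • ((2:ℚ)⁻¹ •
            ((⅟ s * (u * v * (σ * θ))) * (⅟ s * (u * v * (σ * θ))))) := by
      simp only [mul_add, add_mul, mul_smul_comm, smul_mul_assoc, smul_add]
      abel
    rw [expand, h3, smul_zero, smul_zero, add_zero]
    have h1 : s * (⅟ s * (u * v * (σ * θ))) = u * v * (σ * θ) := by
      rw [← mul_assoc, mul_invOf_self, one_mul]
    have h2 : (⅟ s * (u * v * (σ * θ))) * s = u * v * (σ * θ) := by
      rw [hinv, mul_assoc, invOf_mul_self, mul_one]
    rw [h1, h2, add_assoc, ← add_smul]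
    norm_num
  · have expand :
      ((θ * u + σ * v) * ⅟ s) * (s + (2 : ℚ)⁻¹ • (⅟ s * (u * v * (σ * θ))))
      = (θ * u + σ * v) * (⅟ s * s)
        + (2 : ℚ)⁻¹ • ((θ * u + σ * v) * (⅟ s * (⅟ s * (u * v * (σ * θ))))) := by
      simp only [mul_add, mul_smul_comm, mul_assoc]
    rw [expand, invOf_mul_self, mul_one]
    have : (θ * u + σ * v) * (⅟ s * (⅟ s * (u * v * (σ * θ)))) = 0 := by
      rw [hinv]
      rw [← mul_assoc, key _ hθu, zero_mul]
    rw [this, smul_zero, add_zero]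
  · have expand :
      ((σ * u - θ * v) * ⅟ s) * (s + (2 : ℚ)⁻¹ • (⅟ s * (u * v * (σ * θ))))
      = (σ * u - θ * v) * (⅟ s * s)
        + (2 : ℚ)⁻¹ • ((σ * u - θ * v) * (⅟ s * (⅟ s * (u * v * (σ * θ))))) := by
      simp only [mul_add, mul_smul_comm, mul_assoc]
    rw [expand, invOf_mul_self, mul_one]
    have : (σ * u - θ * v) * (⅟ s * (⅟ s * (u * v * (σ * θ)))) = 0 := by
      rw [hinv]
      rw [← mul_assoc, key _ hσu, zero_mul]
    rw [this, smul_zero, add_zero]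
end

section
/- Let A be a ℚ-algebra. Let u, v be central elements of A, s a central invertible element with s² = u² + v², and σ, θ ∈ A odd elements: σ² = θ² = 0, σθ = −θσ. Define σ′ = (σu − θv)·s⁻¹ and θ′ = (θu + σv)·s⁻¹. Suppose e, f, g are central elements of A with f invertible, satisfying e·f = u² + v² + u·v·σθ and f·g = u² + v² + u·v·σ′θ′. Then g = e. That is, applying the super Ptolemy transformation of λ-lengths twice returns the original λ-length. -/
/-- claim (1) of the appendix of the paper.  Applying the super
Ptolemy transformation of `λ`-lengths twice returns the original `λ`-length:
with `u = √(bd)`, `v = √(ac)`, `s = √(ac+bd)`,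
`σ' = (σu - θv)s⁻¹`, `θ' = (θu + σv)s⁻¹`, if `e·f = u² + v² + uv·σθ` and
`f·g = u² + v² + uv·σ'θ'` with `e, f, g` central and `f` invertible, then
`g = e`. -/
theorem super_ptolemy_flip_involution_on_lambda
    (A : Type*) [Ring A] [Algebra ℚ A]
    (u v s σ θ e f g : A) [Invertible s] [Invertible f]
    (hu : ∀ x : A, u * x = x * u)
    (hv : ∀ x : A, v * x = x * v)
    (hs : ∀ x : A, s * x = x * s)
    (he : ∀ x : A, e * x = x * e)
    (hf : ∀ x : A, f * x = x * f)
    (hg : ∀ x : A, g * x = x * g)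
    (hs2 : s * s = u * u + v * v)
    (hσ : σ * σ = 0) (hθ : θ * θ = 0)
    (hσθ : σ * θ = -(θ * σ))
    (hef : e * f = u * u + v * v + u * v * (σ * θ))
    (hfg : f * g = u * u + v * v
        + u * v * ((( σ * u - θ * v) * ⅟ s) * ((θ * u + σ * v) * ⅟ s))) :
    g = e := by
  have hsi : ∀ x : A, ⅟ s * x = x * ⅟ s := fun x => (Commute.invOf_left (hs x)).eq
  -- a central element can be pulled through
  have cc : ∀ (w : A), (∀ x : A, w * x = x * w) → ∀ a b z : A,
      a * w * (b * z) = a * b * (w * z) := by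
    intro w hw a b z
    rw [mul_assoc a w, ← mul_assoc w b, hw b, mul_assoc b w, ← mul_assoc]
  have hθσ : θ * σ = -(σ * θ) := by rw [hσθ, neg_neg]
  have expand : (σ * u - θ * v) * (θ * u + σ * v) = σ * θ * (s * s) := by
    rw [sub_mul, mul_add, mul_add, cc u hu σ θ u, cc u hu σ σ v,
      cc v hv θ θ u, cc v hv θ σ v, hσ, hθ, hθσ, hs2]
    noncomm_ring
  have key : ((σ * u - θ * v) * ⅟ s) * ((θ * u + σ * v) * ⅟ s) = σ * θ := by
    calc ((σ * u - θ * v) * ⅟ s) * ((θ * u + σ * v) * ⅟ s)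
        = ((σ * u - θ * v) * ((θ * u + σ * v)) * (⅟ s * ⅟ s)) := by
          simp only [mul_assoc]; rw [← mul_assoc (⅟ s), hsi, mul_assoc]
      _ = σ * θ * ((s * s) * (⅟ s * ⅟ s)) := by rw [expand, mul_assoc]
      _ = σ * θ := by
          rw [mul_assoc s, ← mul_assoc s (⅟ s), mul_invOf_self, one_mul,
            mul_invOf_self, mul_one]
  rw [key, ← hef, ← hf] at hfg
  calc g = ⅟ f * (f * g) := by rw [invOf_mul_cancel_left]
    _ = ⅟ f * (f * e) := by rw [hfg]
    _ = e := by rw [invOf_mul_cancel_left]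
end

section
/- Let A be a ℚ-algebra. Let u, v be central elements of A, s a central invertible element with s² = u² + v², and σ, θ ∈ A odd elements: σ² = θ² = 0, σθ = −θσ. Define σ′ = (σu − θv)·s⁻¹ and θ′ = (θu + σv)·s⁻¹. Then (θ′·v + σ′·u)·s⁻¹ = σ and (σ′·v − θ′·u)·s⁻¹ = −θ. That is, applying the super Ptolemy μ-transformation twice (with the roles of the products ac and bd exchanged on the second flip) returns the original μ-invariants up to the sign change θ ↦ −θ. -/
/-- The super Ptolemy transformation of `μ`-invariants is not an
involution (Remark 4.2 / Figure 4 of the paper): with `u = √(bd)`, `v = √(ac)`,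
`s = √(ac+bd)` and `σ' = (σu - θv)s⁻¹`, `θ' = (θu + σv)s⁻¹`, applying the
transformation again with the roles of the products `ac` and `bd` exchanged
gives `(θ'v + σ'u)s⁻¹ = σ` and `(σ'v - θ'u)s⁻¹ = -θ`. -/
theorem super_ptolemy_mu_double_flip
    (A : Type*) [Ring A] [Algebra ℚ A]
    (u v s σ θ : A) [Invertible s]
    (hu : ∀ x : A, u * x = x * u)
    (hv : ∀ x : A, v * x = x * v)
    (hs : ∀ x : A, s * x = x * s)
    (hs2 : s * s = u * u + v * v)
    (hσ : σ * σ = 0) (hθ : θ * θ = 0)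
    (hσθ : σ * θ = -(θ * σ)) :
    ((((θ * u + σ * v) * ⅟ s) * v + (((σ * u - θ * v) * ⅟ s)) * u) * ⅟ s = σ)
    ∧ ((((σ * u - θ * v) * ⅟ s) * v - (((θ * u + σ * v) * ⅟ s)) * u) * ⅟ s = -θ) := by
  have ht : ∀ x : A, ⅟ s * x = x * ⅟ s := by
    intro x
    calc ⅟ s * x = ⅟ s * x * (s * ⅟ s) := by rw [mul_invOf_self, mul_one]
      _ = ⅟ s * (x * s) * ⅟ s := by rw [← mul_assoc, mul_assoc (⅟ s) x s]
      _ = ⅟ s * (s * x) * ⅟ s := by rw [hs]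
      _ = x * ⅟ s := by rw [← mul_assoc, invOf_mul_self, one_mul]
  have e1 : ∀ a b : A, a * ⅟ s * b = a * b * ⅟ s := by
    intro a b; rw [mul_assoc, ht, ← mul_assoc]
  have cancel : ∀ x : A, x * (s * s) * ⅟ s * ⅟ s = x := by
    intro x
    calc x * (s * s) * ⅟ s * ⅟ s = x * (s * (s * ⅟ s) * ⅟ s) := by noncomm_ring
      _ = x := by rw [mul_invOf_self, mul_one, mul_invOf_self, mul_one]
  constructor
  · calc (((θ * u + σ * v) * ⅟ s) * v + (((σ * u - θ * v) * ⅟ s)) * u) * ⅟ s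
        = ((θ * u + σ * v) * v + (σ * u - θ * v) * u) * ⅟ s * ⅟ s := by
          rw [e1, e1, ← add_mul, mul_assoc, ht, ← mul_assoc]
      _ = (θ * (u * v) + σ * (v * v) + σ * (u * u) - θ * (v * u)) * ⅟ s * ⅟ s := by
          noncomm_ring
      _ = (θ * (u * v) + σ * (v * v) + σ * (u * u) - θ * (u * v)) * ⅟ s * ⅟ s := by
          rw [hv u]
      _ = σ * (u * u + v * v) * ⅟ s * ⅟ s := by noncomm_ring
      _ = σ * (s * s) * ⅟ s * ⅟ s := by rw [hs2]
      _ = σ := cancel σ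
  · calc (((σ * u - θ * v) * ⅟ s) * v - (((θ * u + σ * v) * ⅟ s)) * u) * ⅟ s
        = ((σ * u - θ * v) * v - (θ * u + σ * v) * u) * ⅟ s * ⅟ s := by
          rw [e1, e1, ← sub_mul, mul_assoc, ht, ← mul_assoc]
      _ = (σ * (u * v) - θ * (v * v) - θ * (u * u) - σ * (v * u)) * ⅟ s * ⅟ s := by
          noncomm_ring
      _ = (σ * (u * v) - θ * (v * v) - θ * (u * u) - σ * (u * v)) * ⅟ s * ⅟ s := by
          rw [hv u]
      _ = (-θ) * (u * u + v * v) * ⅟ s * ⅟ s := by noncomm_ring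
      _ = (-θ) * (s * s) * ⅟ s * ⅟ s := by rw [hs2]
      _ = -θ := cancel (-θ)
end

section
/- Let the n-gon with vertices 1, …, n carry the fan triangulation with all internal diagonals incident to vertex 1. For 2 ≤ i ≤ n−1 let α_{i−1} denote the T-path from 2 to n given by the vertex sequence (2, 1, i, i+1, 1, n) with edge sequence ((2,1),(1,i),(i,i+1),(i+1,1),(1,n)), where for i = 2 and i = n−1 the backtracking pair of equal consecutive edges is cancelled, yielding a shorter path. Then the set of ordinary T-paths from 2 to n in this fan triangulation is exactly {α_1, …, α_{n−2}}. In particular, for n = 3 there is a unique T-path from 2 to 3, consisting of the single edge (2,3). -/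
namespace FanTPaths

/-- Edges of the fan triangulation of the `n`-gon with vertices `1, …, n` and all
internal diagonals incident to vertex `1`: all pairs `{1, i}` and all pairs
`{i, i+1}`. -/
def isFanEdge (n u v : ℕ) : Prop :=
  u ≠ v ∧ 1 ≤ u ∧ u ≤ n ∧ 1 ≤ v ∧ v ≤ n ∧
    (u = 1 ∨ v = 1 ∨ v = u + 1 ∨ u = v + 1)

/-- The edge `{u, v}` of the fan crosses the arc `(2, n)` precisely when it is a
diagonal `{1, i}` with `3 ≤ i ≤ n - 1`. -/
def crossesArc (n u v : ℕ) : Prop :=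
  (u = 1 ∧ 3 ≤ v ∧ v ≤ n - 1) ∨ (v = 1 ∧ 3 ≤ u ∧ u ≤ n - 1)

/-- Schiffler's `T`-path axioms (T1)–(T6) for a path from `2` to `n`, encoded by
the list of its vertices `vs = [a₀, …, a_ℓ]`:  `a₀ = 2`, `a_ℓ = n`, consecutive
vertices are joined by edges of the triangulation, no edge (as an unordered pair)
is used twice, `ℓ` is odd, every even-numbered edge crosses the arc `(2, n)`, and
the crossing points occur in order from `2` to `n` (for the fan, the crossing of
`{1, i}` is the closer to `2` the smaller `i` is). -/
def IsTPath (n : ℕ) (vs : List ℕ) : Prop :=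
  2 ≤ vs.length ∧ Even vs.length ∧
  vs.getD 0 0 = 2 ∧ vs.getD (vs.length - 1) 0 = n ∧
  (∀ j, j + 1 < vs.length → isFanEdge n (vs.getD j 0) (vs.getD (j + 1) 0)) ∧
  (∀ j j', j < j' → j' + 1 < vs.length →
    ¬ ((vs.getD j 0 = vs.getD j' 0 ∧ vs.getD (j + 1) 0 = vs.getD (j' + 1) 0) ∨
       (vs.getD j 0 = vs.getD (j' + 1) 0 ∧ vs.getD (j + 1) 0 = vs.getD j' 0))) ∧
  (∀ j, j + 1 < vs.length → Odd j →
    crossesArc n (vs.getD j 0) (vs.getD (j + 1) 0)) ∧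
  (∀ j j', j < j' → j' + 1 < vs.length →
    crossesArc n (vs.getD j 0) (vs.getD (j + 1) 0) →
    crossesArc n (vs.getD j' 0) (vs.getD (j' + 1) 0) →
    max (vs.getD j 0) (vs.getD (j + 1) 0) < max (vs.getD j' 0) (vs.getD (j' + 1) 0))

/-- The `T`-path `α_{i-1} = (2, 1, i, i+1, 1, n)` of the fan, with backtracking
removed in the degenerate cases `i = 2` and `i = n - 1` (and in the special case
`n = 3` it is the single edge `(2,3)`). -/
def alpha (n i : ℕ) : List ℕ :=
  if n = 3 then [2, 3]
  else if i = 2 then [2, 3, 1, n]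
  else if i = n - 1 then [2, 1, n - 1, n]
  else [2, 1, i, i + 1, 1, n]

lemma list_eq_of_getD (l m : List ℕ) (h : l.length = m.length)
    (h2 : ∀ j, j < l.length → l.getD j 0 = m.getD j 0) : l = m := by
  apply List.ext_getElem h
  intro j hj hj'
  have := h2 j hj
  rwa [List.getD_eq_getElem, List.getD_eq_getElem] at this

lemma isTPath_alpha (n i : ℕ) (hn : 3 ≤ n) (h2 : 2 ≤ i) (h1 : i ≤ n - 1) :
    IsTPath n (alpha n i) := by
  unfold alpha
  split_ifs with c1 c2 c3
  · subst c1
    refine ⟨by simp, by simp, by simp, by simp, ?_, ?_, ?_, ?_⟩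
    · intro j hj; simp at hj; have hjb : j ≤ 4 := by omega
      interval_cases j <;> simp [isFanEdge] <;> omega
    · intro j j' hjj hj'; simp at hj'; omega
    · intro j hj hodd; simp at hj; rw [Nat.odd_iff] at hodd; omega
    · intro j j' hjj hj'; simp at hj'; omega
  · subst c2
    have hn4 : 4 ≤ n := by omega
    refine ⟨by simp, by simp [Nat.even_iff], by simp, by simp, ?_, ?_, ?_, ?_⟩
    · intro j hj; simp at hj; have hjb : j ≤ 4 := by omega
      interval_cases j <;> simp [isFanEdge] <;> omega
    · intro j j' hjj hj'; simp at hj'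
      have b1 : j' ≤ 4 := by omega
      have b2 : j ≤ 3 := by omega
      interval_cases j' <;> interval_cases j <;> simp <;> omega
    · intro j hj hodd; simp at hj; rw [Nat.odd_iff] at hodd
      have hjb : j ≤ 4 := by omega
      interval_cases j <;> simp_all [crossesArc] <;> omega
    · intro j j' hjj hj' hc1 hc2; simp at hj'
      have b1 : j' ≤ 4 := by omega
      have b2 : j ≤ 3 := by omega
      interval_cases j' <;> interval_cases j <;>
        simp [crossesArc] at hc1 hc2 ⊢ <;> omega
  · have hn4 : 4 ≤ n := by omega
    refine ⟨by simp, by simp [Nat.even_iff], by simp, by simp, ?_, ?_, ?_, ?_⟩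
    · intro j hj; simp at hj; have hjb : j ≤ 4 := by omega
      interval_cases j <;> simp [isFanEdge] <;> omega
    · intro j j' hjj hj'; simp at hj'
      have b1 : j' ≤ 4 := by omega
      have b2 : j ≤ 3 := by omega
      interval_cases j' <;> interval_cases j <;> simp <;> omega
    · intro j hj hodd; simp at hj; rw [Nat.odd_iff] at hodd
      have hjb : j ≤ 4 := by omega
      interval_cases j <;> simp_all [crossesArc] <;> omega
    · intro j j' hjj hj' hc1 hc2; simp at hj'
      have b1 : j' ≤ 4 := by omega
      have b2 : j ≤ 3 := by omega
      interval_cases j' <;> interval_cases j <;>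
        simp [crossesArc] at hc1 hc2 ⊢ <;> omega
  · have hn4 : 4 ≤ n := by omega
    have hi3 : 3 ≤ i := by omega
    have hin : i ≤ n - 2 := by omega
    refine ⟨by simp, by simp [Nat.even_iff], by simp, by simp, ?_, ?_, ?_, ?_⟩
    · intro j hj; simp at hj; have hjb : j ≤ 4 := by omega
      interval_cases j <;> simp [isFanEdge] <;> omega
    · intro j j' hjj hj'; simp at hj'
      have b1 : j' ≤ 4 := by omega
      have b2 : j ≤ 3 := by omega
      interval_cases j' <;> interval_cases j <;> simp <;> omega
    · intro j hj hodd; simp at hj; rw [Nat.odd_iff] at hodd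
      have hjb : j ≤ 4 := by omega
      interval_cases j <;> simp_all [crossesArc] <;> omega
    · intro j j' hjj hj' hc1 hc2; simp at hj'
      have b1 : j' ≤ 4 := by omega
      have b2 : j ≤ 3 := by omega
      interval_cases j' <;> interval_cases j <;>
        simp [crossesArc] at hc1 hc2 ⊢ <;> omega


lemma mid (n : ℕ) (vs : List ℕ) (h : IsTPath n vs) (j : ℕ) (hj : Odd j)
    (hjl : j + 3 < vs.length) :
    vs.getD j 0 = 1 ∧ vs.getD (j+3) 0 = 1 ∧
    vs.getD (j+2) 0 = vs.getD (j+1) 0 + 1 ∧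
    3 ≤ vs.getD (j+1) 0 ∧ vs.getD (j+2) 0 ≤ n - 1 := by
  obtain ⟨hlen, heven, h0, hL, hedge, hnorep, hcross, hord⟩ := h
  have hj2 : Odd (j+2) := by rw [Nat.odd_iff] at *; omega
  have c1 := hcross j (by omega) hj
  have c2 := hcross (j+2) (by omega) hj2
  rw [show j+2+1 = j+3 by omega] at c2
  have e1 := hedge (j+1) (by omega)
  rw [show j+1+1 = j+2 by omega] at e1
  obtain ⟨hne, -, -, -, hle2, hfan⟩ := e1
  rcases c1 with ⟨ha, hb1, hb2⟩ | ⟨hb, ha1, ha2⟩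
  · -- vs[j] = 1, x := vs[j+1] ≥ 3
    rcases c2 with ⟨hc, hd1, hd2⟩ | ⟨hd, hc1, hc2⟩
    · -- vs[j+2] = 1 : e_{j+1} = (x,1) crosses, ordering contradiction with e_j
      exfalso
      have cx : crossesArc n (vs.getD (j+1) 0) (vs.getD (j+2) 0) :=
        Or.inr ⟨hc, hb1, hb2⟩
      have := hord j (j+1) (by omega) (by omega) (Or.inl ⟨ha, hb1, hb2⟩) cx
      rw [show j+1+1 = j+2 by omega] at this
      rw [ha, hc] at this
      omega
    · -- vs[j+3] = 1, y := vs[j+2] ≥ 3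
      have hxy : vs.getD (j+1) 0 < vs.getD (j+2) 0 := by
        have := hord j (j+2) (by omega) (by omega)
          (Or.inl ⟨ha, hb1, hb2⟩) (by rw [show j+2+1 = j+3 by omega]; exact Or.inr ⟨hd, hc1, hc2⟩)
        rw [show j+2+1 = j+3 by omega] at this
        rw [ha, hd] at this
        omega
      have : vs.getD (j+2) 0 = vs.getD (j+1) 0 + 1 := by
        rcases hfan with h' | h' | h' | h' <;> omega
      exact ⟨ha, hd, this, hb1, hc2⟩
  · -- vs[j+1] = 1
    exfalso
    rcases c2 with ⟨hc, hd1, hd2⟩ | ⟨hd, hc1, hc2⟩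
    · exact hne (by rw [hb, hc])
    · have cx : crossesArc n (vs.getD (j+1) 0) (vs.getD (j+2) 0) :=
        Or.inl ⟨hb, hc1, hc2⟩
      have := hord (j+1) (j+2) (by omega) (by omega)
        (by rw [show j+1+1 = j+2 by omega]; exact cx)
        (by rw [show j+2+1 = j+3 by omega]; exact Or.inr ⟨hd, hc1, hc2⟩)
      rw [show j+1+1 = j+2 by omega, show j+2+1 = j+3 by omega] at this
      rw [hb, hd] at this
      omega

lemma tpath_is_alpha (n : ℕ) (hn : 3 ≤ n) (vs : List ℕ) (h : IsTPath n vs) :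
    ∃ i, 2 ≤ i ∧ i ≤ n - 1 ∧ vs = alpha n i := by
  obtain ⟨hlen, heven, h0, hL, hedge, hnorep, hcross, hord⟩ := id h
  have hle6 : vs.length ≤ 6 := by
    by_contra hgt
    push_neg at hgt
    have h8 : 8 ≤ vs.length := by rw [Nat.even_iff] at heven; omega
    obtain ⟨m1a, m1b, m1c, m1d, m1e⟩ := mid n vs h 1 (by decide) (by omega)
    obtain ⟨m2a, m2b, m2c, m2d, m2e⟩ := mid n vs h 3 (by decide) (by omega)
    simp only [Nat.reduceAdd] at m1a m1b m1c m1d m1e m2a m2b m2c m2d m2e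
    omega
  have hcases : vs.length = 2 ∨ vs.length = 4 ∨ vs.length = 6 := by
    rw [Nat.even_iff] at heven; omega
  rcases hcases with hc | hc | hc
  · -- length 2 : edge (2, n), so n = 3
    rw [hc] at hL
    simp only [Nat.reduceSub] at hL
    have e0 := hedge 0 (by omega)
    simp only [Nat.reduceAdd] at e0
    rw [h0] at e0
    rw [hL] at e0
    obtain ⟨hne, -, -, -, hnn, hfan⟩ := e0
    have hn3 : n = 3 := by rcases hfan with h'|h'|h'|h' <;> omega
    refine ⟨2, le_refl 2, by omega, ?_⟩
    have ha : alpha n 2 = [2, 3] := by rw [alpha, if_pos hn3]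
    rw [ha]
    apply list_eq_of_getD _ _ (by simp [hc])
    intro j hj
    rw [hc] at hj
    interval_cases j <;> simp only [List.getD_cons_zero, List.getD_cons_succ] <;> omega
  · -- length 4
    rw [hc] at hL
    simp only [Nat.reduceSub] at hL
    have c1 := hcross 1 (by omega) (by decide)
    simp only [Nat.reduceAdd] at c1
    rcases c1 with ⟨ha, hb1, hb2⟩ | ⟨hb, ha1, ha2⟩
    · -- vs[1]=1, 3 ≤ vs[2] ≤ n-1 : vs[2] = n-1
      have e2 := hedge 2 (by omega)
      simp only [Nat.reduceAdd] at e2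
      rw [hL] at e2
      obtain ⟨hne, -, -, -, hnn, hfan⟩ := e2
      have hv2 : vs.getD 2 0 = n - 1 := by
        rcases hfan with h'|h'|h'|h' <;> omega
      have hn4 : 4 ≤ n := by omega
      refine ⟨n - 1, by omega, le_refl _, ?_⟩
      have ha' : alpha n (n-1) = [2, 1, n - 1, n] := by
        rw [alpha, if_neg (by omega), if_neg (by omega), if_pos rfl]
      rw [ha']
      apply list_eq_of_getD _ _ (by simp [hc])
      intro j hj
      rw [hc] at hj
      interval_cases j <;> simp only [List.getD_cons_zero, List.getD_cons_succ] <;> omega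
    · -- vs[2]=1, 3 ≤ vs[1] ≤ n-1 : vs[1] = 3
      have e0 := hedge 0 (by omega)
      simp only [Nat.reduceAdd] at e0
      rw [h0] at e0
      obtain ⟨hne, -, -, -, hnn, hfan⟩ := e0
      have hv1 : vs.getD 1 0 = 3 := by
        rcases hfan with h'|h'|h'|h' <;> omega
      have hn4 : 4 ≤ n := by omega
      refine ⟨2, le_refl _, by omega, ?_⟩
      have ha' : alpha n 2 = [2, 3, 1, n] := by
        rw [alpha, if_neg (by omega), if_pos rfl]
      rw [ha']
      apply list_eq_of_getD _ _ (by simp [hc])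
      intro j hj
      rw [hc] at hj
      interval_cases j <;> simp only [List.getD_cons_zero, List.getD_cons_succ] <;> omega
  · -- length 6
    rw [hc] at hL
    simp only [Nat.reduceSub] at hL
    obtain ⟨m1a, m1b, m1c, m1d, m1e⟩ := mid n vs h 1 (by decide) (by omega)
    simp only [Nat.reduceAdd] at m1a m1b m1c m1d m1e
    have hn5 : 5 ≤ n := by omega
    refine ⟨vs.getD 2 0, by omega, by omega, ?_⟩
    have ha' : alpha n (vs.getD 2 0) = [2, 1, vs.getD 2 0, vs.getD 2 0 + 1, 1, n] := by
      rw [alpha, if_neg (by omega), if_neg (by omega), if_neg (by omega)]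
    rw [ha']
    apply list_eq_of_getD _ _ (by simp [hc])
    intro j hj
    rw [hc] at hj
    interval_cases j <;> simp only [List.getD_cons_zero, List.getD_cons_succ] <;> omega

/-- Lemma 5.14 of the paper, due to Schiffler.  In the fan
triangulation of the `n`-gon with center `1`, the set of ordinary `T`-paths from
`2` to `n` is exactly `{α_1, …, α_{n-2}}` (i.e. `{alpha n i : 2 ≤ i ≤ n - 1}`).
In particular for `n = 3` there is a unique `T`-path, the single edge `(2,3)`. -/
theorem fan_TPaths_classification (n : ℕ) (hn : 3 ≤ n) :
    ({vs : List ℕ | IsTPath n vs}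
      = {vs : List ℕ | ∃ i, 2 ≤ i ∧ i ≤ n - 1 ∧ vs = alpha n i})
    ∧ (n = 3 → {vs : List ℕ | IsTPath n vs} = {[2, 3]}) := by
  constructor
  · ext vs
    simp only [Set.mem_setOf_eq]
    constructor
    · exact tpath_is_alpha n hn vs
    · rintro ⟨i, h2, h1, rfl⟩
      exact isTPath_alpha n i hn h2 h1
  · intro h3
    subst h3
    ext vs
    simp only [Set.mem_setOf_eq, Set.mem_singleton_iff]
    constructor
    · intro h
      obtain ⟨i, h2, h1, he⟩ := tpath_is_alpha 3 (le_refl 3) vs h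
      rw [he]
      simp [alpha]
    · rintro rfl
      have := isTPath_alpha 3 2 (le_refl 3) (le_refl 2) (by norm_num)
      simpa [alpha] using this

end FanTPaths
end

section
/- Let the n-gon with vertices 1, …, n carry the fan triangulation with all internal diagonals incident to vertex 1, and form the associated auxiliary graph for the pair (2, n), with internal vertices θ_1, …, θ_{n−2} (one per triangle, ordered from 2 to n), σ-edges σ_i joining θ_i to the fan center 1, and τ-edges τ_{ij} joining θ_i to θ_j for i < j. Then every super T-path from 2 to n that uses at least one σ- or τ-edge is of the form (2, 1, θ_i, θ_j, 1, n | (2,1), σ_i, τ_{ij}, σ_j, (1,n)) for some 1 ≤ i < j ≤ n−1, and conversely each such sequence is a super T-path from 2 to n. Hence there are exactly C(n−2, 2) such paths. -/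
namespace FanSuperTPaths

/-- Edges of the fan triangulation of the `n`-gon with center `1`. -/
def isFanEdge (n u v : ℕ) : Prop :=
  u ≠ v ∧ 1 ≤ u ∧ u ≤ n ∧ 1 ≤ v ∧ v ≤ n ∧
    (u = 1 ∨ v = 1 ∨ v = u + 1 ∨ u = v + 1)

/-- Vertices of the auxiliary graph: `Sum.inl u` is the polygon vertex `u`,
`Sum.inr i` is the internal vertex `θ_i` of the `i`-th triangle `(1, i+1, i+2)`,
`1 ≤ i ≤ n - 2`. -/
abbrev V := ℕ ⊕ ℕ

/-- Adjacency in the auxiliary graph of the fan (for the arc `(2, n)`):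
edges of the triangulation, `σ`-edges `σ_i = (θ_i, 1)` joining each internal
vertex to the fan center `1`, and `τ`-edges `τ_{ij} = (θ_i, θ_j)`. -/
def isAuxEdge (n : ℕ) : V → V → Prop
  | Sum.inl u, Sum.inl v => isFanEdge n u v
  | Sum.inl u, Sum.inr i => u = 1 ∧ 1 ≤ i ∧ i ≤ n - 2
  | Sum.inr i, Sum.inl u => u = 1 ∧ 1 ≤ i ∧ i ≤ n - 2
  | Sum.inr i, Sum.inr j => i ≠ j ∧ 1 ≤ i ∧ i ≤ n - 2 ∧ 1 ≤ j ∧ j ≤ n - 2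

/-- `crossPos n e m` : the auxiliary edge with endpoint pair `e` crosses the arc
`(2, n)`, at linear position `m` along the arc (diagonals `{1, v}` at position
`2v`, `σ`-edges `σ_i` at position `2i + 3`; `τ`-edges and boundary edges do not
cross). -/
def crossPos (n : ℕ) : V × V → ℕ → Prop
  | (Sum.inl u, Sum.inl v), m =>
      ((u = 1 ∧ 3 ≤ v ∧ v ≤ n - 1) ∧ m = 2 * v) ∨
      ((v = 1 ∧ 3 ≤ u ∧ u ≤ n - 1) ∧ m = 2 * u)
  | (Sum.inl _, Sum.inr i), m => m = 2 * i + 3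
  | (Sum.inr i, Sum.inl _), m => m = 2 * i + 3
  | (Sum.inr _, Sum.inr _), _ => False

/-- The endpoint pair is a `σ`-edge. -/
def isSigma : V × V → Prop
  | (Sum.inl _, Sum.inr _) => True
  | (Sum.inr _, Sum.inl _) => True
  | _ => False

/-- The endpoint pair is a `τ`-edge. -/
def isTau : V × V → Prop
  | (Sum.inr _, Sum.inr _) => True
  | _ => False

/-- Super `T`-path axioms (T1)–(T7) from `2` to `n` in the auxiliary graph of the
fan, for the list of visited vertices `vs`. -/
def IsSuperTPath (n : ℕ) (vs : List V) : Prop :=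
  2 ≤ vs.length ∧ Even vs.length ∧
  vs.getD 0 (Sum.inl 0) = Sum.inl 2 ∧
  vs.getD (vs.length - 1) (Sum.inl 0) = Sum.inl n ∧
  (∀ j, j + 1 < vs.length →
    isAuxEdge n (vs.getD j (Sum.inl 0)) (vs.getD (j + 1) (Sum.inl 0))) ∧
  (∀ j j', j < j' → j' + 1 < vs.length →
    ¬ ((vs.getD j (Sum.inl 0) = vs.getD j' (Sum.inl 0) ∧
        vs.getD (j + 1) (Sum.inl 0) = vs.getD (j' + 1) (Sum.inl 0)) ∨
       (vs.getD j (Sum.inl 0) = vs.getD (j' + 1) (Sum.inl 0) ∧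
        vs.getD (j + 1) (Sum.inl 0) = vs.getD j' (Sum.inl 0)))) ∧
  (∀ j, j + 1 < vs.length → Odd j →
    ∃ m, crossPos n (vs.getD j (Sum.inl 0), vs.getD (j + 1) (Sum.inl 0)) m) ∧
  (∀ j, j + 1 < vs.length →
    isSigma (vs.getD j (Sum.inl 0), vs.getD (j + 1) (Sum.inl 0)) → Odd j) ∧
  (∀ j, j + 1 < vs.length →
    isTau (vs.getD j (Sum.inl 0), vs.getD (j + 1) (Sum.inl 0)) → Even j) ∧
  (∀ j j', j < j' → j' + 1 < vs.length → ∀ m m',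
    crossPos n (vs.getD j (Sum.inl 0), vs.getD (j + 1) (Sum.inl 0)) m →
    crossPos n (vs.getD j' (Sum.inl 0), vs.getD (j' + 1) (Sum.inl 0)) m' →
    m < m')

/-- The path uses at least one `σ`- or `τ`- edge, i.e. visits an internal
vertex. -/
def usesInternal (vs : List V) : Prop :=
  ∃ j, j < vs.length ∧ (vs.getD j (Sum.inl 0)).isRight

lemma backward {n i j : ℕ} (hn : 3 ≤ n) (h1 : 1 ≤ i) (hij : i < j) (hj : j ≤ n - 2) :
    IsSuperTPath n [Sum.inl 2, Sum.inl 1, Sum.inr i, Sum.inr j, Sum.inl 1, Sum.inl n] := by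
  have hn4 : 4 ≤ n := by omega
  refine ⟨by simp, ⟨3, rfl⟩, rfl, rfl, ?_, ?_, ?_, ?_, ?_, ?_⟩
  · intro a ha
    have ha' : a < 5 := by simp at ha; omega
    interval_cases a <;>
      simp [isAuxEdge, isFanEdge] <;> omega
  · intro a b hab hb
    have hb' : b < 5 := by simp at hb; omega
    interval_cases b <;> interval_cases a <;> simp <;> omega
  · intro a ha hodd
    have ha' : a < 5 := by simp at ha; omega
    interval_cases a
    · exact absurd hodd (by decide)
    · exact ⟨2 * i + 3, rfl⟩
    · exact absurd hodd (by decide)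
    · exact ⟨2 * j + 3, rfl⟩
    · exact absurd hodd (by decide)
  · intro a ha hs
    have ha' : a < 5 := by simp at ha; omega
    interval_cases a <;> simp [isSigma] at hs ⊢ <;> decide
  · intro a ha ht
    have ha' : a < 5 := by simp at ha; omega
    interval_cases a <;> simp [isTau] at ht ⊢ <;> decide
  · intro a b hab hb m m' hm hm'
    have hb' : b < 5 := by simp at hb; omega
    interval_cases b <;> interval_cases a <;>
      simp [crossPos] at hm hm' <;> omega

lemma forward {n : ℕ} (hn : 3 ≤ n) {vs : List V}
    (h : IsSuperTPath n vs) (hu : usesInternal vs) :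
    ∃ i j : ℕ, 1 ≤ i ∧ i < j ∧ j ≤ n - 2 ∧
      vs = [Sum.inl 2, Sum.inl 1, Sum.inr i, Sum.inr j, Sum.inl 1, Sum.inl n] := by
  obtain ⟨hlen2, heven, h0, hlast, hadj, hdist, hcross, hsig, htau, hord⟩ := h
  obtain ⟨j0, hj0, hr0⟩ := hu
  have hP : ∃ a, (vs.getD a (Sum.inl 0)).isRight := ⟨j0, hr0⟩
  set k := Nat.find hP with hkdef
  have hks : (vs.getD k (Sum.inl 0)).isRight := Nat.find_spec hP
  clear_value k
  have hmin : ∀ a, a < k → ∃ u, vs.getD a (Sum.inl 0) = Sum.inl u := by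
    intro a ha
    have := Nat.find_min hP (hkdef ▸ ha)
    rcases hv : vs.getD a (Sum.inl 0) with u | b
    · exact ⟨u, rfl⟩
    · rw [hv] at this; simp at this
  have hkL : k < vs.length := by
    by_contra hc
    rw [List.getD_eq_default _ _ (le_of_not_gt hc)] at hks
    simp at hks
  obtain ⟨i, hi⟩ : ∃ i, vs.getD k (Sum.inl 0) = Sum.inr i := by
    rcases hv : vs.getD k (Sum.inl 0) with u | b
    · rw [hv] at hks; simp at hks
    · exact ⟨b, rfl⟩
  have hk0 : k ≠ 0 := by
    intro hc; rw [hc, h0] at hi; simp at hi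
  obtain ⟨m, rfl⟩ : ∃ m, k = m + 1 := ⟨k - 1, by omega⟩
  have hkne : m + 1 ≠ vs.length - 1 := by
    intro hc; rw [hc, hlast] at hi; simp at hi
  have hk1L : m + 1 + 1 < vs.length := by omega
  obtain ⟨u, hu1⟩ := hmin m (by omega)
  have hedge : isAuxEdge n (vs.getD m (Sum.inl 0)) (vs.getD (m + 1) (Sum.inl 0)) :=
    hadj m (by omega)
  rw [hu1, hi] at hedge
  obtain ⟨hu1', hile, hige⟩ : u = 1 ∧ 1 ≤ i ∧ i ≤ n - 2 := hedge
  subst hu1'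
  have hoddm : Odd m := by
    apply hsig m (by omega)
    rw [hu1, hi]; trivial
  obtain ⟨j, hjv, hij0, hjle, hjge⟩ :
      ∃ j, vs.getD (m + 1 + 1) (Sum.inl 0) = Sum.inr j ∧ i ≠ j ∧ 1 ≤ j ∧ j ≤ n - 2 := by
    have hedge2 : isAuxEdge n (vs.getD (m + 1) (Sum.inl 0)) (vs.getD (m + 1 + 1) (Sum.inl 0)) :=
      hadj (m + 1) hk1L
    rcases hv : vs.getD (m + 1 + 1) (Sum.inl 0) with u2 | b
    · exfalso
      have hso : Odd (m + 1) := by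
        apply hsig (m + 1) hk1L
        rw [hi, hv]; trivial
      obtain ⟨a, ha⟩ := hoddm; obtain ⟨b, hb⟩ := hso; omega
    · rw [hi, hv] at hedge2
      exact ⟨b, rfl, hedge2.1, hedge2.2.2.2.1, hedge2.2.2.2.2⟩
  have hk2ne : m + 1 + 1 ≠ vs.length - 1 := by
    intro hc; rw [hc, hlast] at hjv; simp at hjv
  have hk2L : m + 1 + 1 + 1 < vs.length := by omega
  have hjv2 : vs.getD (m + 1 + 1 + 1) (Sum.inl 0) = Sum.inl 1 := by
    have hedge3 : isAuxEdge n (vs.getD (m + 1 + 1) (Sum.inl 0))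
        (vs.getD (m + 1 + 1 + 1) (Sum.inl 0)) := hadj (m + 1 + 1) hk2L
    rcases hv : vs.getD (m + 1 + 1 + 1) (Sum.inl 0) with u3 | b
    · rw [hjv, hv] at hedge3
      rw [hedge3.1]
    · exfalso
      have hte : Even (m + 1 + 1) := by
        apply htau (m + 1 + 1) hk2L
        rw [hjv, hv]; trivial
      obtain ⟨a, ha⟩ := hoddm; obtain ⟨b, hb⟩ := hte; omega
  -- show m = 1
  have hm1 : m = 1 := by
    by_contra hc
    obtain ⟨s, rfl⟩ : ∃ s, m = s + 2 := by
      obtain ⟨a, ha⟩ := hoddm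
      exact ⟨m - 2, by omega⟩
    obtain ⟨w, hw⟩ := hmin (s + 1) (by omega)
    obtain ⟨y, hy⟩ := hmin s (by omega)
    have hedgew : isAuxEdge n (vs.getD (s + 1) (Sum.inl 0)) (vs.getD (s + 1 + 1) (Sum.inl 0)) :=
      hadj (s + 1) (by omega)
    rw [hw, show s + 1 + 1 = s + 2 from rfl, hu1] at hedgew
    have hwne : w ≠ 1 := hedgew.1
    obtain ⟨m0, hm0⟩ := hcross s (by omega)
      (by obtain ⟨a, ha⟩ := hoddm; exact ⟨a - 1, by omega⟩)
    rw [hy, hw] at hm0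
    have hy1 : y = 1 := by
      rcases hm0 with ⟨⟨h1', _⟩, _⟩ | ⟨⟨h1', _⟩, _⟩
      · exact h1'
      · exact absurd h1' hwne
    refine hdist s (s + 1) (by omega) (by omega) (Or.inr ⟨?_, rfl⟩)
    rw [hy, hy1, show s + 1 + 1 = s + 2 from rfl, hu1]
  subst hm1
  have e1 : vs.getD 1 (Sum.inl 0) = Sum.inl 1 := hu1
  have e2 : vs.getD 2 (Sum.inl 0) = Sum.inr i := hi
  have e3 : vs.getD 3 (Sum.inl 0) = Sum.inr j := hjv
  have e4 : vs.getD 4 (Sum.inl 0) = Sum.inl 1 := hjv2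
  have h4ne : (4 : ℕ) ≠ vs.length - 1 := by
    intro hc
    rw [hc, hlast] at e4
    simp at e4; omega
  have h5L : 5 < vs.length := by omega
  have hL6 : vs.length = 6 := by
    by_contra hc
    have h6L : 6 < vs.length := by
      obtain ⟨a, ha⟩ := heven; omega
    obtain ⟨w, hw, hwne⟩ : ∃ w, vs.getD 5 (Sum.inl 0) = Sum.inl w ∧ w ≠ 1 := by
      have hedge4 : isAuxEdge n (vs.getD 4 (Sum.inl 0)) (vs.getD 5 (Sum.inl 0)) :=
        hadj 4 (by omega)
      rw [e4] at hedge4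
      rcases hv : vs.getD 5 (Sum.inl 0) with u4 | b
      · rw [hv] at hedge4
        exact ⟨u4, rfl, fun hh => hedge4.1 hh.symm⟩
      · exfalso
        have : Odd 4 := by
          apply hsig 4 (by omega)
          rw [e4, hv]; trivial
        exact (by decide : ¬ Odd 4) this
    obtain ⟨x, hx⟩ : ∃ x, vs.getD 6 (Sum.inl 0) = Sum.inl x := by
      have hedge5 : isAuxEdge n (vs.getD 5 (Sum.inl 0)) (vs.getD 6 (Sum.inl 0)) :=
        hadj 5 (by omega)
      rcases hv : vs.getD 6 (Sum.inl 0) with u5 | b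
      · exact ⟨u5, rfl⟩
      · rw [hw, hv] at hedge5
        exact absurd hedge5.1 hwne
    obtain ⟨m0, hm0⟩ := hcross 5 (by omega) (by decide)
    rw [hw, show (5 : ℕ) + 1 = 6 from rfl, hx] at hm0
    have hx1 : x = 1 := by
      rcases hm0 with ⟨⟨h1', _⟩, _⟩ | ⟨⟨h1', _⟩, _⟩
      · exact absurd h1' hwne
      · exact h1'
    refine hdist 4 5 (by omega) (by omega) (Or.inr ⟨?_, rfl⟩)
    rw [e4, show (5 : ℕ) + 1 = 6 from rfl, hx, hx1]
  have hlast' : vs.getD 5 (Sum.inl 0) = Sum.inl n := by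
    rw [← hlast, hL6]
  have hij : i < j := by
    have := hord 1 3 (by omega) (by omega) (2 * i + 3) (2 * j + 3)
      (by rw [e1, show (1 : ℕ) + 1 = 2 from rfl, e2]; rfl)
      (by rw [e3, show (3 : ℕ) + 1 = 4 from rfl, e4]; rfl)
    omega
  refine ⟨i, j, hile, hij, hjge, ?_⟩
  apply List.ext_getElem (by simp [hL6])
  intro a h1 h2
  simp only [hL6] at h1
  have hg : ∀ b (hb : b < vs.length), vs[b] = vs.getD b (Sum.inl 0) :=
    fun b hb => (List.getD_eq_getElem vs (Sum.inl 0) hb).symm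
  interval_cases a
  · rw [hg 0 (by omega), h0]; rfl
  · rw [hg 1 (by omega), e1]; rfl
  · rw [hg 2 (by omega), e2]; rfl
  · rw [hg 3 (by omega), e3]; rfl
  · rw [hg 4 (by omega), e4]; rfl
  · rw [hg 5 (by omega), hlast']; rfl

lemma card_pairs (m : ℕ) :
    ((Finset.Icc 1 m ×ˢ Finset.Icc 1 m).filter fun p => p.1 < p.2).card = m.choose 2 := by
  have h := Finset.card_eq_sum_card_fiberwise
    (f := fun p : ℕ × ℕ => p.2)
    (s := (Finset.Icc 1 m ×ˢ Finset.Icc 1 m).filter fun p => p.1 < p.2)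
    (t := Finset.Icc 1 m)
    (by intro p hp; simp at hp ⊢; omega)
  rw [h]
  have hfib : ∀ b ∈ Finset.Icc 1 m,
      (((Finset.Icc 1 m ×ˢ Finset.Icc 1 m).filter fun p => p.1 < p.2).filter
        fun p => p.2 = b).card = b - 1 := by
    intro b hb
    simp only [Finset.mem_Icc] at hb
    have heq : (((Finset.Icc 1 m ×ˢ Finset.Icc 1 m).filter fun p => p.1 < p.2).filter
        fun p => p.2 = b) = (Finset.Ico 1 b).image fun i => (i, b) := by
      ext p
      simp only [Finset.mem_filter, Finset.mem_product, Finset.mem_Icc, Finset.mem_image,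
        Finset.mem_Ico]
      constructor
      · rintro ⟨⟨⟨⟨h1, h2⟩, h3, h4⟩, h5⟩, h6⟩
        exact ⟨p.1, ⟨h1, by omega⟩, by rw [← h6]⟩
      · rintro ⟨a, ⟨ha1, ha2⟩, rfl⟩
        refine ⟨⟨⟨⟨ha1, by omega⟩, by omega, hb.2⟩, ha2⟩, rfl⟩
    rw [heq, Finset.card_image_of_injective _ (fun a b' hab => (Prod.ext_iff.mp hab).1),
      Nat.card_Ico]
  rw [Finset.sum_congr rfl hfib]
  have hsum : ∑ b ∈ Finset.Icc 1 m, (b - 1) = ∑ b ∈ Finset.range m, b := by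
    rw [← Finset.Ico_add_one_right_eq_Icc, Finset.sum_Ico_eq_sum_range]
    simp
  rw [hsum, Finset.sum_range_id, Nat.choose_two_right]

/-- Lemma 5.16 of the paper.  In the fan triangulation of the
`n`-gon with center `1`, every super `T`-path from `2` to `n` which uses a `σ`- or
`τ`-edge is of the form `(2, 1, θ_i, θ_j, 1, n | (2,1), σ_i, τ_{ij}, σ_j, (1,n))`
with `i < j`, and conversely; hence there are exactly `C(n-2, 2)` of them. -/
theorem fan_super_TPaths_classification (n : ℕ) (hn : 3 ≤ n) :
    ({vs : List V | IsSuperTPath n vs ∧ usesInternal vs}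
      = {vs : List V | ∃ i j : ℕ, 1 ≤ i ∧ i < j ∧ j ≤ n - 2 ∧
          vs = [Sum.inl 2, Sum.inl 1, Sum.inr i, Sum.inr j, Sum.inl 1, Sum.inl n]})
    ∧ {vs : List V | IsSuperTPath n vs ∧ usesInternal vs}.ncard
        = Nat.choose (n - 2) 2 := by
  have hset : ({vs : List V | IsSuperTPath n vs ∧ usesInternal vs}
      = {vs : List V | ∃ i j : ℕ, 1 ≤ i ∧ i < j ∧ j ≤ n - 2 ∧
          vs = [Sum.inl 2, Sum.inl 1, Sum.inr i, Sum.inr j, Sum.inl 1, Sum.inl n]}) := by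
    ext vs
    simp only [Set.mem_setOf_eq]
    constructor
    · rintro ⟨h, hu⟩; exact forward hn h hu
    · rintro ⟨i, j, h1, hij, hj, rfl⟩
      exact ⟨backward hn h1 hij hj, 2, by simp, by simp⟩
  refine ⟨hset, ?_⟩
  rw [hset]
  have hinj : Function.Injective fun p : ℕ × ℕ =>
      ([Sum.inl 2, Sum.inl 1, Sum.inr p.1, Sum.inr p.2, Sum.inl 1, Sum.inl n] : List V) := by
    rintro ⟨a, b⟩ ⟨c, d⟩ hcd
    simp only [List.cons.injEq, Sum.inr.injEq] at hcd
    simp [hcd.2.2.1, hcd.2.2.2.1]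
  have himg : {vs : List V | ∃ i j : ℕ, 1 ≤ i ∧ i < j ∧ j ≤ n - 2 ∧
          vs = [Sum.inl 2, Sum.inl 1, Sum.inr i, Sum.inr j, Sum.inl 1, Sum.inl n]}
      = (fun p : ℕ × ℕ =>
          ([Sum.inl 2, Sum.inl 1, Sum.inr p.1, Sum.inr p.2, Sum.inl 1, Sum.inl n] : List V)) ''
        ↑((Finset.Icc 1 (n - 2) ×ˢ Finset.Icc 1 (n - 2)).filter fun p => p.1 < p.2) := by
    ext vs
    simp only [Set.mem_setOf_eq, Set.mem_image, Finset.coe_filter, Finset.mem_coe,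
      Finset.mem_product, Finset.mem_Icc, Set.mem_setOf_eq]
    constructor
    · rintro ⟨i, j, h1, hij, hj, rfl⟩
      exact ⟨(i, j), ⟨⟨⟨h1, by omega⟩, by omega, hj⟩, hij⟩, rfl⟩
    · rintro ⟨⟨i, j⟩, ⟨⟨⟨h1, _⟩, _, hj⟩, hij⟩, rfl⟩
      exact ⟨i, j, h1, hij, hj, rfl⟩
  rw [himg, Set.ncard_image_of_injective _ hinj, Set.ncard_coe_finset, card_pairs]

end FanSuperTPaths
end

section
/- Consider the fan triangulation of an n-gon with vertices 1, …, n and all internal diagonals at vertex 1, with the default orientation (all internal diagonals oriented away from 1). Work in a ℚ-algebra with central invertible even elements λ_{1,i} (2 ≤ i ≤ n) and λ_{i,i+1} (2 ≤ i ≤ n−1), together with chosen central square roots multiplicative on the products that occur, and pairwise anticommuting square-zero odd elements θ_1, …, θ_{n−2} commuting with all even elements (θ_i is the μ-invariant of the triangle (1, i+1, i+2)). Define λ_{2,k} and μ_k (the μ-invariant of the triangle (1,2,k)) recursively by μ_3 = θ_1 and, for 4 ≤ k ≤ n, by the super Ptolemy relations: λ_{1,k−1}·λ_{2,k} = λ_{1,2}λ_{k−1,k}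 + λ_{1,k}λ_{2,k−1} + √(λ_{1,2}λ_{2,k−1}λ_{k−1,k}λ_{1,k})·μ_{k−1}·θ_{k−2} and μ_k·√(λ_{1,k−1}λ_{2,k}) = θ_{k−2}·√(λ_{1,2}λ_{k−1,k}) + μ_{k−1}·√(λ_{1,k}λ_{2,k−1}). Then for all 3 ≤ k ≤ n: √(λ_{2,k}/(λ_{1,2}λ_{1,k}))·μ_k = Σ_{i=1}^{k−2} θ̃_i, where θ̃_i := √(λ_{i+1,i+2}/(λ_{1,i+1}λ_{1,i+2}))·θ_i. -/
/-- Theorem 6.3(a) of the paper.  Fan triangulation of the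
`n`-gon with vertices `1, …, n`, all internal diagonals at vertex `1`, default
orientation (all diagonals oriented away from `1`).  We work in a `ℚ`-algebra `A`
with a positive cone `Pos` of central invertible even elements (closed under
addition, multiplication and `Ring.inverse`) carrying a coherent multiplicative
choice of square roots `sqrt`.  `lam1 i` is the `λ`-length `λ_{1,i}`
(`2 ≤ i ≤ n`), `lamb i` is `λ_{i,i+1}` (`2 ≤ i ≤ n-1`), `θ i` is the odd
`μ`-invariant of the triangle `(1, i+1, i+2)` (`1 ≤ i ≤ n-2`).  The elements
`lam2 k = λ_{2,k}` and `mu k = μ`-invariant of the triangle `(1,2,k)` are defined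
recursively by `μ₃ = θ₁` and the super Ptolemy relations for the flips of the
arcs `(1,3), (1,4), …, (1,k-1)`.  Then for all `3 ≤ k ≤ n`:
`√(λ_{2,k}/(λ_{1,2}λ_{1,k}))·μ_k = Σ_{i=1}^{k-2} θ̃_i`, where
`θ̃_i = √(λ_{i+1,i+2}/(λ_{1,i+1}λ_{1,i+2}))·θ_i`. -/
theorem fan_mu_invariant_expansion
    (A : Type*) [Ring A] [Algebra ℚ A] (n : ℕ) (hn : 3 ≤ n)
    (Pos : Set A) (sqrt : A → A)
    (hPosAdd : ∀ p ∈ Pos, ∀ q ∈ Pos, p + q ∈ Pos)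
    (hPosMul : ∀ p ∈ Pos, ∀ q ∈ Pos, p * q ∈ Pos)
    (hPosInv : ∀ p ∈ Pos, Ring.inverse p ∈ Pos)
    (hPosCentral : ∀ p ∈ Pos, ∀ x : A, p * x = x * p)
    (hPosUnit : ∀ p ∈ Pos, IsUnit p)
    (hsqrtSq : ∀ p ∈ Pos, sqrt p * sqrt p = p)
    (hsqrtMem : ∀ p ∈ Pos, sqrt p ∈ Pos)
    (hsqrtMul : ∀ p ∈ Pos, ∀ q ∈ Pos, sqrt (p * q) = sqrt p * sqrt q)
    (lam1 lamb : ℕ → A) (θ : ℕ → A)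
    (hlam1P : ∀ i, 2 ≤ i → i ≤ n → lam1 i ∈ Pos)
    (hlambP : ∀ i, 2 ≤ i → i + 1 ≤ n → lamb i ∈ Pos)
    (hθ0 : ∀ i, 1 ≤ i → i ≤ n - 2 → θ i * θ i = 0)
    (hθanti : ∀ i j, 1 ≤ i → i ≤ n - 2 → 1 ≤ j → j ≤ n - 2 →
      θ i * θ j = -(θ j * θ i))
    (lam2 mu : ℕ → A)
    (hlam2P : ∀ k, 3 ≤ k → k ≤ n → lam2 k ∈ Pos)
    (hlam23 : lam2 3 = lamb 2)
    (hmu3 : mu 3 = θ 1)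
    -- super Ptolemy recursion for the λ-lengths
    (hrecLam : ∀ k, 4 ≤ k → k ≤ n →
      lam1 (k - 1) * lam2 k
        = lam1 2 * lamb (k - 1) + lam1 k * lam2 (k - 1)
          + sqrt (lam1 2 * lam2 (k - 1) * lamb (k - 1) * lam1 k)
            * (mu (k - 1) * θ (k - 2)))
    -- super Ptolemy recursion for the μ-invariants
    (hrecMu : ∀ k, 4 ≤ k → k ≤ n →
      mu k * sqrt (lam1 (k - 1) * lam2 k)
        = θ (k - 2) * sqrt (lam1 2 * lamb (k - 1))
          + mu (k - 1) * sqrt (lam1 k * lam2 (k - 1))) :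
    ∀ k, 3 ≤ k → k ≤ n →
      sqrt (lam2 k * Ring.inverse (lam1 2 * lam1 k)) * mu k
        = ∑ i ∈ Finset.Icc 1 (k - 2),
            sqrt (lamb (i + 1) * Ring.inverse (lam1 (i + 1) * lam1 (i + 2))) * θ i := by
  intro k hk
  induction k, hk using Nat.le_induction with
  | base =>
    intro _
    rw [hlam23, hmu3]
    norm_num
  | succ k hk IH =>
    intro hkn
    have hkn' : k ≤ n := by omega
    have IH' := IH hkn'
    -- memberships
    have ha : lam1 2 ∈ Pos := hlam1P 2 le_rfl (by omega)
    have hb : lam1 k ∈ Pos := hlam1P k (by omega) hkn'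
    have hcc : lam1 (k + 1) ∈ Pos := hlam1P (k + 1) (by omega) hkn
    have hd : lamb k ∈ Pos := hlambP k (by omega) hkn
    have he : lam2 k ∈ Pos := hlam2P k hk hkn'
    have hf : lam2 (k + 1) ∈ Pos := hlam2P (k + 1) (by omega) hkn
    have hua : IsUnit (lam1 2) := hPosUnit _ ha
    have hub : IsUnit (lam1 k) := hPosUnit _ hb
    have huc : IsUnit (lam1 (k + 1)) := hPosUnit _ hcc
    -- the recursion at k+1
    have hrec := hrecMu (k + 1) (by omega) hkn
    have e1 : k + 1 - 1 = k := by omega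
    have e2 : k + 1 - 2 = k - 1 := by omega
    rw [e1, e2] at hrec
    -- rewrite the sum
    rw [e2]
    have e3 : k - 1 = (k - 2) + 1 := by omega
    rw [e3, Finset.sum_Icc_succ_top (by omega : (1:ℕ) ≤ k - 2 + 1), ← e3, ← IH']
    have e4 : k - 1 + 1 = k := by omega
    have e5 : k - 1 + 2 = k + 1 := by omega
    rw [e4, e5]
    -- abbreviations for sqrt arguments being in Pos
    have hXP : lam2 (k + 1) * Ring.inverse (lam1 2 * lam1 (k + 1)) ∈ Pos :=
      hPosMul _ hf _ (hPosInv _ (hPosMul _ ha _ hcc))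
    have hadP : lam1 2 * lamb k ∈ Pos := hPosMul _ ha _ hd
    have hceP : lam1 (k + 1) * lam2 k ∈ Pos := hPosMul _ hcc _ he
    have hbfP : lam1 k * lam2 (k + 1) ∈ Pos := hPosMul _ hb _ hf
    have hYP : lam2 k * Ring.inverse (lam1 2 * lam1 k) ∈ Pos :=
      hPosMul _ he _ (hPosInv _ (hPosMul _ ha _ hb))
    have hZP : lamb k * Ring.inverse (lam1 k * lam1 (k + 1)) ∈ Pos :=
      hPosMul _ hd _ (hPosInv _ (hPosMul _ hb _ hcc))
    -- even identity (I)
    have keyI :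
        sqrt (lam2 (k + 1) * Ring.inverse (lam1 2 * lam1 (k + 1))) * sqrt (lam1 2 * lamb k)
          = sqrt (lamb k * Ring.inverse (lam1 k * lam1 (k + 1))) * sqrt (lam1 k * lam2 (k + 1)) := by
      rw [← hsqrtMul _ hXP _ hadP, ← hsqrtMul _ hZP _ hbfP]
      congr 1
      rw [Ring.mul_inverse_rev' (hPosCentral _ ha (lam1 (k + 1))),
        Ring.mul_inverse_rev' (hPosCentral _ hb (lam1 (k + 1)))]
      simp only [mul_assoc]
      rw [Ring.inverse_mul_cancel_left _ _ hua, Ring.inverse_mul_cancel_left _ _ hub]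
      rw [hPosCentral _ hf (Ring.inverse (lam1 (k + 1)) * lamb k), mul_assoc,
        hPosCentral _ hd (lam2 (k + 1)),
        hPosCentral _ hd (Ring.inverse (lam1 (k + 1)) * lam2 (k + 1)), mul_assoc]
    -- even identity (II)
    have keyII :
        sqrt (lam2 (k + 1) * Ring.inverse (lam1 2 * lam1 (k + 1))) * sqrt (lam1 (k + 1) * lam2 k)
          = sqrt (lam2 k * Ring.inverse (lam1 2 * lam1 k)) * sqrt (lam1 k * lam2 (k + 1)) := by
      rw [← hsqrtMul _ hXP _ hceP, ← hsqrtMul _ hYP _ hbfP]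
      congr 1
      rw [hPosCentral _ ha (lam1 (k + 1)), hPosCentral _ ha (lam1 k),
        Ring.mul_inverse_rev' (hPosCentral _ hcc (lam1 2)),
        Ring.mul_inverse_rev' (hPosCentral _ hb (lam1 2))]
      simp only [mul_assoc]
      rw [Ring.inverse_mul_cancel_left _ _ huc, Ring.inverse_mul_cancel_left _ _ hub]
      rw [hPosCentral _ hf (Ring.inverse (lam1 2) * lam2 k), mul_assoc,
        hPosCentral _ he (lam2 (k + 1)),
        hPosCentral _ he (Ring.inverse (lam1 2) * lam2 (k + 1)), mul_assoc]
    -- now cancel by the unit sqrt (lam1 k * lam2 (k+1))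
    have hu : IsUnit (sqrt (lam1 k * lam2 (k + 1))) := hPosUnit _ (hsqrtMem _ hbfP)
    refine hu.mul_right_cancel ?_
    calc
      sqrt (lam2 (k + 1) * Ring.inverse (lam1 2 * lam1 (k + 1))) * mu (k + 1)
          * sqrt (lam1 k * lam2 (k + 1))
        = sqrt (lam2 (k + 1) * Ring.inverse (lam1 2 * lam1 (k + 1)))
            * (mu (k + 1) * sqrt (lam1 k * lam2 (k + 1))) := by rw [mul_assoc]
      _ = sqrt (lam2 (k + 1) * Ring.inverse (lam1 2 * lam1 (k + 1)))
            * (θ (k - 1) * sqrt (lam1 2 * lamb k))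
          + sqrt (lam2 (k + 1) * Ring.inverse (lam1 2 * lam1 (k + 1)))
            * (mu k * sqrt (lam1 (k + 1) * lam2 k)) := by rw [hrec, mul_add]
      _ = sqrt (lamb k * Ring.inverse (lam1 k * lam1 (k + 1))) * θ (k - 1)
            * sqrt (lam1 k * lam2 (k + 1))
          + sqrt (lam2 k * Ring.inverse (lam1 2 * lam1 k)) * mu k
            * sqrt (lam1 k * lam2 (k + 1)) := by
            rw [← hPosCentral _ (hsqrtMem _ hadP) (θ (k - 1)),
              ← hPosCentral _ (hsqrtMem _ hceP) (mu k),
              ← mul_assoc, ← mul_assoc, keyI, keyII,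
              mul_assoc _ _ (θ (k - 1)), mul_assoc _ _ (mu k),
              hPosCentral _ (hsqrtMem _ hbfP) (θ (k - 1)),
              hPosCentral _ (hsqrtMem _ hbfP) (mu k),
              ← mul_assoc, ← mul_assoc]
      _ = (sqrt (lam2 k * Ring.inverse (lam1 2 * lam1 k)) * mu k
          + sqrt (lamb k * Ring.inverse (lam1 k * lam1 (k + 1))) * θ (k - 1))
            * sqrt (lam1 k * lam2 (k + 1)) := by rw [add_mul, add_comm]
end

section
/- Consider the fan triangulation of an n-gon with vertices 1, …, n and all internal diagonals at vertex 1, with the default orientation. Work in a ℚ-algebra with central invertible even elements λ_{1,i} (2 ≤ i ≤ n) and λ_{i,i+1} (2 ≤ i ≤ n−1), with chosen central square roots multiplicative on the products that occur, and pairwise anticommuting square-zero odd elements θ_1, …, θ_{n−2}. Define λ_{2,k} and μ_k recursively by μ_3 = θ_1, λ_{2,3} given, and for 4 ≤ k ≤ n: λ_{1,k−1}·λ_{2,k} = λ_{1,2}λ_{k−1,k} + λ_{1,k}λ_{2,k−1} + √(λ_{1,2}λ_{2,k−1}λ_{k−1,k}λ_{1,k})·μ_{k−1}·θ_{k−2}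 and μ_k·√(λ_{1,k−1}λ_{2,k}) = θ_{k−2}·√(λ_{1,2}λ_{k−1,k}) + μ_{k−1}·√(λ_{1,k}λ_{2,k−1}). Then for all 3 ≤ k ≤ n: λ_{2,k} = Σ_{i=2}^{k−1} λ_{1,2}·λ_{i,i+1}·λ_{1,k}·(λ_{1,i}λ_{1,i+1})⁻¹ + λ_{1,2}·λ_{1,k}·Σ_{1 ≤ i < j ≤ k−2} θ̃_i·θ̃_j, where θ̃_i := √(λ_{i+1,i+2}/(λ_{1,i+1}λ_{1,i+2}))·θ_i. The first sum ranges over the ordinary T-paths of the fan and the second over the super T-paths using a pair of σ-edges. -/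
private lemma swp {A : Type*} [Ring A] {c : A}
    (hc : ∀ x : A, c * x = x * c) (x y : A) : x * (c * y) = c * (x * y) := by
  rw [← mul_assoc, ← hc, mul_assoc]

private lemma step_core {A : Type*} [Ring A]
    (a2 a3 a4 b3 L L' S S' T T' Q Q' D s2 s3 s4 sb3 sL v3 : A)
    (sL' mu3 mu4 th : A)
    (ca2 : ∀ x : A, a2 * x = x * a2) (ca3 : ∀ x : A, a3 * x = x * a3)
    (cs2 : ∀ x : A, s2 * x = x * s2) (cs3 : ∀ x : A, s3 * x = x * s3)
    (cs4 : ∀ x : A, s4 * x = x * s4) (csb3 : ∀ x : A, sb3 * x = x * sb3)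
    (csL : ∀ x : A, sL * x = x * sL) (cv3 : ∀ x : A, v3 * x = x * v3)
    (ua3 : IsUnit a3) (us3 : IsUnit s3)
    (hs2sq : s2 * s2 = a2) (hs3sq : s3 * s3 = a3) (hs4sq : s4 * s4 = a4)
    (hkey : s3 * (s4 * v3) = sb3)
    (hT' : T' = T + v3 * th)
    (hS : a3 * S' = a4 * S + a2 * b3)
    (hQ : Q' = Q + D)
    (hTD : T * (v3 * th) = D)
    (ihP : L = S + a2 * a3 * Q)
    (ihM : mu3 * sL = s2 * s3 * T)
    (hrecL : a3 * L' = a2 * b3 + a4 * L + s2 * sL * sb3 * s4 * (mu3 * th))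
    (hrecM : mu4 * (s3 * sL') = th * (s2 * sb3) + mu3 * (s4 * sL)) :
    L' = S' + a2 * a4 * Q' ∧ mu4 * sL' = s2 * s4 * T' := by
  constructor
  · apply ua3.mul_left_cancel
    have hcross : s2 * sL * sb3 * s4 * (mu3 * th) = a2 * (a3 * (a4 * D)) := by
      simp only [mul_assoc]
      rw [swp csb3 sL, swp cs4 sL, ← mul_assoc sL mu3 th, csL mu3, ihM]
      simp only [mul_assoc]
      rw [swp cs2 s4, swp cs2 sb3, ← mul_assoc s2 s2, hs2sq, ← hkey]
      simp only [mul_assoc]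
      rw [swp cs4 v3, swp cs3 v3, swp cs3 s4, swp cs3 s4,
        ← mul_assoc s3 s3, hs3sq, ← mul_assoc s4 s4, hs4sq,
        ← swp cv3 T th, hTD]
    rw [hrecL, hcross, ihP, hQ]
    simp only [mul_add]
    rw [hS]
    have hJ1 : a4 * (a2 * a3 * Q) = a3 * (a2 * a4 * Q) := by
      simp only [mul_assoc]
      rw [swp ca2 a4, swp ca2 a3, swp ca3 a4]
    have hJ2 : a2 * (a3 * (a4 * D)) = a3 * (a2 * a4 * D) := by
      simp only [mul_assoc]
      rw [swp ca2 a3]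
    rw [hJ1, hJ2]
    abel
  · apply us3.mul_left_cancel
    rw [← swp cs3 mu4 sL', hrecM, swp cs4 mu3 sL, ihM, hT']
    simp only [mul_add]
    have hA : s4 * (s2 * s3 * T) = s3 * (s2 * s4 * T) := by
      simp only [mul_assoc]
      rw [swp cs2 s4, swp cs2 s3, swp cs3 s4]
    have hB : th * (s2 * sb3) = s3 * (s2 * s4 * (v3 * th)) := by
      rw [← mul_assoc th s2 sb3, ← cs2 th, mul_assoc s2 th sb3, ← csb3 th]
      simp only [mul_assoc]
      rw [swp cs2 s3, ← mul_assoc s4 v3 th, ← mul_assoc s3 (s4 * v3) th, hkey]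
    rw [hA, hB]
    exact add_comm _ _


/-- Theorem 6.3(b) of the paper.  Same setting as Theorem
6.3(a): fan triangulation of the `n`-gon with center `1` and the default
orientation, in a `ℚ`-algebra with a positive cone `Pos` of central invertible
even elements and a coherent multiplicative choice of square roots `sqrt`;
`lam1 i = λ_{1,i}`, `lamb i = λ_{i,i+1}`, `θ i` the odd `μ`-invariant of the
triangle `(1,i+1,i+2)`, and `lam2 k = λ_{2,k}`, `mu k` defined recursively by
`μ₃ = θ₁`, `λ_{2,3}` given, and the super Ptolemy relations for the flips of
`(1,3), …, (1,k-1)`.  Then for all `3 ≤ k ≤ n`: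
`λ_{2,k} = Σ_{i=2}^{k-1} λ_{1,2}λ_{i,i+1}λ_{1,k}(λ_{1,i}λ_{1,i+1})⁻¹
 + λ_{1,2}λ_{1,k}·Σ_{1 ≤ i < j ≤ k-2} θ̃_i θ̃_j`,
with `θ̃_i = √(λ_{i+1,i+2}/(λ_{1,i+1}λ_{1,i+2}))·θ_i`; the first sum ranges over
the ordinary `T`-paths of the fan and the second over the super `T`-paths using
a pair of `σ`-edges. -/
theorem fan_lambda_length_expansion
    (A : Type*) [Ring A] [Algebra ℚ A] (n : ℕ) (hn : 3 ≤ n)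
    (Pos : Set A) (sqrt : A → A)
    (hPosAdd : ∀ p ∈ Pos, ∀ q ∈ Pos, p + q ∈ Pos)
    (hPosMul : ∀ p ∈ Pos, ∀ q ∈ Pos, p * q ∈ Pos)
    (hPosInv : ∀ p ∈ Pos, Ring.inverse p ∈ Pos)
    (hPosCentral : ∀ p ∈ Pos, ∀ x : A, p * x = x * p)
    (hPosUnit : ∀ p ∈ Pos, IsUnit p)
    (hsqrtSq : ∀ p ∈ Pos, sqrt p * sqrt p = p)
    (hsqrtMem : ∀ p ∈ Pos, sqrt p ∈ Pos)
    (hsqrtMul : ∀ p ∈ Pos, ∀ q ∈ Pos, sqrt (p * q) = sqrt p * sqrt q)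
    (lam1 lamb : ℕ → A) (θ : ℕ → A)
    (hlam1P : ∀ i, 2 ≤ i → i ≤ n → lam1 i ∈ Pos)
    (hlambP : ∀ i, 2 ≤ i → i + 1 ≤ n → lamb i ∈ Pos)
    (hθ0 : ∀ i, 1 ≤ i → i ≤ n - 2 → θ i * θ i = 0)
    (hθanti : ∀ i j, 1 ≤ i → i ≤ n - 2 → 1 ≤ j → j ≤ n - 2 →
      θ i * θ j = -(θ j * θ i))
    (lam2 mu : ℕ → A)
    (hlam2P : ∀ k, 3 ≤ k → k ≤ n → lam2 k ∈ Pos)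
    (hlam23 : lam2 3 = lamb 2)
    (hmu3 : mu 3 = θ 1)
    -- super Ptolemy recursion for the λ-lengths
    (hrecLam : ∀ k, 4 ≤ k → k ≤ n →
      lam1 (k - 1) * lam2 k
        = lam1 2 * lamb (k - 1) + lam1 k * lam2 (k - 1)
          + sqrt (lam1 2 * lam2 (k - 1) * lamb (k - 1) * lam1 k)
            * (mu (k - 1) * θ (k - 2)))
    -- super Ptolemy recursion for the μ-invariants
    (hrecMu : ∀ k, 4 ≤ k → k ≤ n →
      mu k * sqrt (lam1 (k - 1) * lam2 k)
        = θ (k - 2) * sqrt (lam1 2 * lamb (k - 1))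
          + mu (k - 1) * sqrt (lam1 k * lam2 (k - 1))) :
    ∀ k, 3 ≤ k → k ≤ n →
      lam2 k
        = (∑ i ∈ Finset.Icc 2 (k - 1),
            lam1 2 * lamb i * lam1 k * Ring.inverse (lam1 i * lam1 (i + 1)))
          + lam1 2 * lam1 k *
            (∑ i ∈ Finset.Icc 1 (k - 2), ∑ j ∈ Finset.Icc (i + 1) (k - 2),
              (sqrt (lamb (i + 1) * Ring.inverse (lam1 (i + 1) * lam1 (i + 2))) * θ i)
                * (sqrt (lamb (j + 1) * Ring.inverse (lam1 (j + 1) * lam1 (j + 2))) * θ j)) := by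
  have hinvc : ∀ p ∈ Pos, p * Ring.inverse p = 1 := fun p hp =>
    Ring.mul_inverse_cancel p (hPosUnit p hp)
  have hmulinv : ∀ p ∈ Pos, ∀ q ∈ Pos, q * (p * Ring.inverse q) = p := by
    intro p hp q hq
    rw [hPosCentral p hp (Ring.inverse q), ← mul_assoc, hinvc q hq, one_mul]
  have hscancel : ∀ p ∈ Pos, ∀ q ∈ Pos, sqrt q * sqrt (p * Ring.inverse q) = sqrt p := by
    intro p hp q hq
    rw [← hsqrtMul q hq _ (hPosMul p hp _ (hPosInv q hq)), hmulinv p hp q hq]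
  have hkey : ∀ i, 1 ≤ i → i + 2 ≤ n →
      sqrt (lam1 (i + 1)) * (sqrt (lam1 (i + 2)) *
        sqrt (lamb (i + 1) * Ring.inverse (lam1 (i + 1) * lam1 (i + 2))))
        = sqrt (lamb (i + 1)) := by
    intro i h1 h2
    rw [← mul_assoc,
      ← hsqrtMul _ (hlam1P (i + 1) (by omega) (by omega)) _ (hlam1P (i + 2) (by omega) h2),
      hscancel _ (hlambP (i + 1) (by omega) (by omega)) _
        (hPosMul _ (hlam1P (i + 1) (by omega) (by omega)) _ (hlam1P (i + 2) (by omega) h2))]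
  have key : ∀ m, 3 ≤ m → m ≤ n →
      (lam2 m
        = (∑ i ∈ Finset.Icc 2 (m - 1),
            lam1 2 * lamb i * lam1 m * Ring.inverse (lam1 i * lam1 (i + 1)))
          + lam1 2 * lam1 m *
            (∑ i ∈ Finset.Icc 1 (m - 2), ∑ j ∈ Finset.Icc (i + 1) (m - 2),
              (sqrt (lamb (i + 1) * Ring.inverse (lam1 (i + 1) * lam1 (i + 2))) * θ i)
                * (sqrt (lamb (j + 1) * Ring.inverse (lam1 (j + 1) * lam1 (j + 2))) * θ j)))
      ∧ mu m * sqrt (lam2 m)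
        = sqrt (lam1 2) * sqrt (lam1 m) *
            (∑ i ∈ Finset.Icc 1 (m - 2),
              sqrt (lamb (i + 1) * Ring.inverse (lam1 (i + 1) * lam1 (i + 2))) * θ i) := by
    intro m hm
    induction m, hm using Nat.le_induction with
    | base =>
      intro hn3
      have ha2 : lam1 2 ∈ Pos := hlam1P 2 le_rfl (by omega)
      have ha3 : lam1 3 ∈ Pos := hlam1P 3 (by omega) hn3
      have hb2 : lamb 2 ∈ Pos := hlambP 2 le_rfl hn3
      have e1 : Finset.Icc 2 (3 - 1) = {2} := rfl
      have e2 : Finset.Icc 1 (3 - 2) = {1} := rfl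
      have e3 : Finset.Icc (1 + 1) (3 - 2) = (∅ : Finset ℕ) := rfl
      constructor
      · rw [hlam23, e1, Finset.sum_singleton, e2, Finset.sum_singleton, e3,
          Finset.sum_empty, mul_zero, add_zero, show (2 : ℕ) + 1 = 3 from rfl,
          hPosCentral _ ha2 (lamb 2), mul_assoc (lamb 2) (lam1 2) (lam1 3),
          mul_assoc (lamb 2), hinvc _ (hPosMul _ ha2 _ ha3), mul_one]
      · rw [hmu3, hlam23, show (3 : ℕ) - 2 = 1 from rfl, Finset.Icc_self,
          Finset.sum_singleton, show (1 : ℕ) + 1 = 2 from rfl, show (1 : ℕ) + 2 = 3 from rfl]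
        have hkey1 : sqrt (lam1 2) * (sqrt (lam1 3) *
            sqrt (lamb 2 * Ring.inverse (lam1 2 * lam1 3))) = sqrt (lamb 2) :=
          hkey 1 le_rfl (by omega)
        rw [mul_assoc (sqrt (lam1 2)) (sqrt (lam1 3)),
          ← mul_assoc (sqrt (lam1 3)) (sqrt (lamb 2 * Ring.inverse (lam1 2 * lam1 3))) (θ 1),
          ← mul_assoc (sqrt (lam1 2))
            (sqrt (lam1 3) * sqrt (lamb 2 * Ring.inverse (lam1 2 * lam1 3))) (θ 1),
          hkey1, ← hPosCentral _ (hsqrtMem _ hb2) (θ 1)]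
    | succ m hm ih =>
      intro h
      obtain ⟨p, rfl⟩ : ∃ p, m = p + 3 := ⟨m - 3, by omega⟩
      obtain ⟨ihP, ihM⟩ := ih (by omega)
      rw [show p + 3 - 1 = p + 2 from by omega, show p + 3 - 2 = p + 1 from by omega] at ihP
      rw [show p + 3 - 2 = p + 1 from by omega] at ihM
      simp only [show p + 3 + 1 = p + 4 from by omega, show p + 4 - 1 = p + 3 from by omega,
        show p + 4 - 2 = p + 2 from by omega]
      -- memberships
      have ha2 : lam1 2 ∈ Pos := hlam1P 2 le_rfl (by omega)
      have ha3 : lam1 (p + 3) ∈ Pos := hlam1P _ (by omega) (by omega)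
      have ha4 : lam1 (p + 4) ∈ Pos := hlam1P _ (by omega) (by omega)
      have hb3 : lamb (p + 3) ∈ Pos := hlambP _ (by omega) (by omega)
      have hL : lam2 (p + 3) ∈ Pos := hlam2P _ (by omega) (by omega)
      have hL' : lam2 (p + 4) ∈ Pos := hlam2P _ (by omega) (by omega)
      have hv3 : lamb (p + 3) * Ring.inverse (lam1 (p + 3) * lam1 (p + 4)) ∈ Pos :=
        hPosMul _ hb3 _ (hPosInv _ (hPosMul _ ha3 _ ha4))
      -- the recursions, with square roots split
      have hrecL := hrecLam (p + 4) (by omega) (by omega)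
      rw [show p + 4 - 1 = p + 3 from by omega, show p + 4 - 2 = p + 2 from by omega,
        hsqrtMul _ (hPosMul _ (hPosMul _ ha2 _ hL) _ hb3) _ ha4,
        hsqrtMul _ (hPosMul _ ha2 _ hL) _ hb3, hsqrtMul _ ha2 _ hL] at hrecL
      have hrecM := hrecMu (p + 4) (by omega) (by omega)
      rw [show p + 4 - 1 = p + 3 from by omega, show p + 4 - 2 = p + 2 from by omega,
        hsqrtMul _ ha3 _ hL', hsqrtMul _ ha2 _ hb3, hsqrtMul _ ha4 _ hL] at hrecM
      -- θ̃-coefficient identity at the new triangle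
      have hkey3 : sqrt (lam1 (p + 3)) * (sqrt (lam1 (p + 4)) *
          sqrt (lamb (p + 3) * Ring.inverse (lam1 (p + 3) * lam1 (p + 4))))
          = sqrt (lamb (p + 3)) := hkey (p + 2) (by omega) (by omega)
      -- sum splittings
      have hsplitT : (∑ i ∈ Finset.Icc 1 (p + 2),
            sqrt (lamb (i + 1) * Ring.inverse (lam1 (i + 1) * lam1 (i + 2))) * θ i)
          = (∑ i ∈ Finset.Icc 1 (p + 1),
              sqrt (lamb (i + 1) * Ring.inverse (lam1 (i + 1) * lam1 (i + 2))) * θ i)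
            + sqrt (lamb (p + 3) * Ring.inverse (lam1 (p + 3) * lam1 (p + 4))) * θ (p + 2) :=
        Finset.sum_Icc_succ_top (by omega) _
      have hQ1 : (∑ i ∈ Finset.Icc 1 (p + 2), ∑ j ∈ Finset.Icc (i + 1) (p + 2),
            (sqrt (lamb (i + 1) * Ring.inverse (lam1 (i + 1) * lam1 (i + 2))) * θ i)
              * (sqrt (lamb (j + 1) * Ring.inverse (lam1 (j + 1) * lam1 (j + 2))) * θ j))
          = (∑ i ∈ Finset.Icc 1 (p + 1), ∑ j ∈ Finset.Icc (i + 1) (p + 2),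
              (sqrt (lamb (i + 1) * Ring.inverse (lam1 (i + 1) * lam1 (i + 2))) * θ i)
                * (sqrt (lamb (j + 1) * Ring.inverse (lam1 (j + 1) * lam1 (j + 2))) * θ j))
            + (∑ j ∈ Finset.Icc (p + 3) (p + 2),
              (sqrt (lamb (p + 3) * Ring.inverse (lam1 (p + 3) * lam1 (p + 4))) * θ (p + 2))
                * (sqrt (lamb (j + 1) * Ring.inverse (lam1 (j + 1) * lam1 (j + 2))) * θ j)) :=
        Finset.sum_Icc_succ_top (by omega) _
      rw [Finset.Icc_eq_empty (show ¬((p + 3 : ℕ) ≤ p + 2) by omega),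
        Finset.sum_empty, add_zero] at hQ1
      have hQ2 : ∀ i ∈ Finset.Icc 1 (p + 1),
          (∑ j ∈ Finset.Icc (i + 1) (p + 2),
            (sqrt (lamb (i + 1) * Ring.inverse (lam1 (i + 1) * lam1 (i + 2))) * θ i)
              * (sqrt (lamb (j + 1) * Ring.inverse (lam1 (j + 1) * lam1 (j + 2))) * θ j))
          = (∑ j ∈ Finset.Icc (i + 1) (p + 1),
              (sqrt (lamb (i + 1) * Ring.inverse (lam1 (i + 1) * lam1 (i + 2))) * θ i)
                * (sqrt (lamb (j + 1) * Ring.inverse (lam1 (j + 1) * lam1 (j + 2))) * θ j))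
            + (sqrt (lamb (i + 1) * Ring.inverse (lam1 (i + 1) * lam1 (i + 2))) * θ i)
              * (sqrt (lamb (p + 3) * Ring.inverse (lam1 (p + 3) * lam1 (p + 4))) * θ (p + 2)) := by
        intro i hi
        have hi' := Finset.mem_Icc.mp hi
        exact Finset.sum_Icc_succ_top (by omega) _
      have hQfull : (∑ i ∈ Finset.Icc 1 (p + 2), ∑ j ∈ Finset.Icc (i + 1) (p + 2),
            (sqrt (lamb (i + 1) * Ring.inverse (lam1 (i + 1) * lam1 (i + 2))) * θ i)
              * (sqrt (lamb (j + 1) * Ring.inverse (lam1 (j + 1) * lam1 (j + 2))) * θ j))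
          = (∑ i ∈ Finset.Icc 1 (p + 1), ∑ j ∈ Finset.Icc (i + 1) (p + 1),
              (sqrt (lamb (i + 1) * Ring.inverse (lam1 (i + 1) * lam1 (i + 2))) * θ i)
                * (sqrt (lamb (j + 1) * Ring.inverse (lam1 (j + 1) * lam1 (j + 2))) * θ j))
            + (∑ i ∈ Finset.Icc 1 (p + 1),
              (sqrt (lamb (i + 1) * Ring.inverse (lam1 (i + 1) * lam1 (i + 2))) * θ i)
                * (sqrt (lamb (p + 3) * Ring.inverse (lam1 (p + 3) * lam1 (p + 4))) * θ (p + 2))) := by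
        rw [hQ1, Finset.sum_congr rfl hQ2, Finset.sum_add_distrib]
      have hTD : (∑ i ∈ Finset.Icc 1 (p + 1),
            sqrt (lamb (i + 1) * Ring.inverse (lam1 (i + 1) * lam1 (i + 2))) * θ i)
            * (sqrt (lamb (p + 3) * Ring.inverse (lam1 (p + 3) * lam1 (p + 4))) * θ (p + 2))
          = (∑ i ∈ Finset.Icc 1 (p + 1),
              (sqrt (lamb (i + 1) * Ring.inverse (lam1 (i + 1) * lam1 (i + 2))) * θ i)
                * (sqrt (lamb (p + 3) * Ring.inverse (lam1 (p + 3) * lam1 (p + 4))) * θ (p + 2))) :=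
        Finset.sum_mul _ _ _
      -- ordinary T-path sum recursion
      have hsplitS : (∑ i ∈ Finset.Icc 2 (p + 3), lam1 (p + 3) *
            (lam1 2 * lamb i * lam1 (p + 4) * Ring.inverse (lam1 i * lam1 (i + 1))))
          = (∑ i ∈ Finset.Icc 2 (p + 2), lam1 (p + 3) *
              (lam1 2 * lamb i * lam1 (p + 4) * Ring.inverse (lam1 i * lam1 (i + 1))))
            + lam1 (p + 3) *
              (lam1 2 * lamb (p + 3) * lam1 (p + 4) * Ring.inverse (lam1 (p + 3) * lam1 (p + 4))) :=
        Finset.sum_Icc_succ_top (by omega) _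
      have hterm : ∀ i ∈ Finset.Icc 2 (p + 2),
          lam1 (p + 3) * (lam1 2 * lamb i * lam1 (p + 4) * Ring.inverse (lam1 i * lam1 (i + 1)))
          = lam1 (p + 4) * (lam1 2 * lamb i * lam1 (p + 3) * Ring.inverse (lam1 i * lam1 (i + 1))) := by
        intro i hi
        have hi' := Finset.mem_Icc.mp hi
        have hli : lamb i ∈ Pos := hlambP i (by omega) (by omega)
        simp only [mul_assoc]
        rw [swp (hPosCentral _ ha2) (lam1 (p + 3)), swp (hPosCentral _ ha2) (lam1 (p + 4)),
          swp (hPosCentral _ hli) (lam1 (p + 3)), swp (hPosCentral _ hli) (lam1 (p + 4)),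
          swp (hPosCentral _ ha3) (lam1 (p + 4))]
      have htop : lam1 (p + 3) *
          (lam1 2 * lamb (p + 3) * lam1 (p + 4) * Ring.inverse (lam1 (p + 3) * lam1 (p + 4)))
          = lam1 2 * lamb (p + 3) := by
        simp only [mul_assoc]
        rw [swp (hPosCentral _ ha2) (lam1 (p + 3)), swp (hPosCentral _ hb3) (lam1 (p + 3)),
          ← mul_assoc (lam1 (p + 3)) (lam1 (p + 4)), hinvc _ (hPosMul _ ha3 _ ha4), mul_one]
      have hS' : lam1 (p + 3) * (∑ i ∈ Finset.Icc 2 (p + 3),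
            lam1 2 * lamb i * lam1 (p + 4) * Ring.inverse (lam1 i * lam1 (i + 1)))
          = lam1 (p + 4) * (∑ i ∈ Finset.Icc 2 (p + 2),
              lam1 2 * lamb i * lam1 (p + 3) * Ring.inverse (lam1 i * lam1 (i + 1)))
            + lam1 2 * lamb (p + 3) := by
        rw [Finset.mul_sum, hsplitS, Finset.sum_congr rfl hterm, ← Finset.mul_sum, htop]
      exact step_core (lam1 2) (lam1 (p + 3)) (lam1 (p + 4)) (lamb (p + 3))
        (lam2 (p + 3)) (lam2 (p + 4)) _ _ _ _ _ _ _
        (sqrt (lam1 2)) (sqrt (lam1 (p + 3))) (sqrt (lam1 (p + 4))) (sqrt (lamb (p + 3)))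
        (sqrt (lam2 (p + 3)))
        (sqrt (lamb (p + 3) * Ring.inverse (lam1 (p + 3) * lam1 (p + 4))))
        (sqrt (lam2 (p + 4))) (mu (p + 3)) (mu (p + 4)) (θ (p + 2))
        (hPosCentral _ ha2) (hPosCentral _ ha3)
        (hPosCentral _ (hsqrtMem _ ha2)) (hPosCentral _ (hsqrtMem _ ha3))
        (hPosCentral _ (hsqrtMem _ ha4)) (hPosCentral _ (hsqrtMem _ hb3))
        (hPosCentral _ (hsqrtMem _ hL)) (hPosCentral _ (hsqrtMem _ hv3))
        (hPosUnit _ ha3) (hPosUnit _ (hsqrtMem _ ha3))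
        (hsqrtSq _ ha2) (hsqrtSq _ ha3) (hsqrtSq _ ha4)
        hkey3 hsplitT hS' hQfull hTD ihP ihM hrecL hrecM
  intro k hk3 hkn
  exact (key k hk3 hkn).1
end

section
/- Let A be a ℚ-algebra. Let b, d, e, f be central invertible even elements with chosen central square roots √b, √d, √e, √f, and let σ, θ, σ′, θ′ be odd elements (each squares to 0, any two of them anticommute, and they commute with even elements) satisfying the super Ptolemy relations for a quadrilateral whose other two sides have λ-length 1: e·f = 1 + b·d + √b·√d·σθ, θ′·√e·√f = θ·√b·√d + σ, and σ′·√e·√f = σ·√b·√d − θ. Define θ̃ = θ·√b·√e, σ̃ = σ·√e·√d, θ̃′ = θ′·√d·√f, σ̃′ = σ′·√b·√f. Then the super-frieze relations of Morier-Genoud–Ovsienko–Tabachnikov hold for the elementary diamond with even entries e, b, d, f and odd entries θ̃, σ̃′, σ̃, θ̃′: (i) e·f = 1 + b·d + σ̃′·σ̃; (ii) θ̃′·e = θ̃·d + σ̃; (iii) σ̃′·e = σ̃·b − θ̃. -/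
/-- Proposition 7.1 of the paper.  Let `b, d, e, f` be central
invertible even elements of a `ℚ`-algebra with chosen central square roots
`sb, sd, se, sf`, and let `σ, θ, σ', θ'` be odd elements satisfying the super
Ptolemy relations for a quadrilateral whose other two sides have `λ`-length `1`:
`e·f = 1 + b·d + √b√d·σθ`, `θ'·√e√f = θ·√b√d + σ`, `σ'·√e√f = σ·√b√d − θ`.
Setting `θ̃ = θ√b√e`, `σ̃ = σ√e√d`, `θ̃' = θ'√d√f`, `σ̃' = σ'√b√f`, the
super-frieze relations of Morier-Genoud–Ovsienko–Tabachnikov hold for the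
elementary diamond `(e, b, d, f; θ̃, σ̃', σ̃, θ̃')`:
(i) `e·f = 1 + b·d + σ̃'·σ̃`, (ii) `θ̃'·e = θ̃·d + σ̃`, (iii) `σ̃'·e = σ̃·b − θ̃`. -/
theorem super_frieze_diamond_from_super_ptolemy
    (A : Type*) [Ring A] [Algebra ℚ A]
    (b d e f sb sd se sf σ θ σ' θ' : A)
    -- the even elements and their chosen square roots are central …
    (hb : ∀ x : A, b * x = x * b) (hd : ∀ x : A, d * x = x * d)
    (he : ∀ x : A, e * x = x * e) (hf : ∀ x : A, f * x = x * f)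
    (hsb : ∀ x : A, sb * x = x * sb) (hsd : ∀ x : A, sd * x = x * sd)
    (hse : ∀ x : A, se * x = x * se) (hsf : ∀ x : A, sf * x = x * sf)
    -- … invertible …
    (hbu : IsUnit b) (hdu : IsUnit d) (heu : IsUnit e) (hfu : IsUnit f)
    -- … and the chosen roots square to them
    (hsb2 : sb * sb = b) (hsd2 : sd * sd = d)
    (hse2 : se * se = e) (hsf2 : sf * sf = f)
    -- σ, θ, σ', θ' are odd: they square to zero and pairwise anticommute
    (hσ2 : σ * σ = 0) (hθ2 : θ * θ = 0) (hσ'2 : σ' * σ' = 0) (hθ'2 : θ' * θ' = 0)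
    (hσθ : σ * θ = -(θ * σ)) (hσσ' : σ * σ' = -(σ' * σ)) (hσθ' : σ * θ' = -(θ' * σ))
    (hθσ' : θ * σ' = -(σ' * θ)) (hθθ' : θ * θ' = -(θ' * θ)) (hσ'θ' : σ' * θ' = -(θ' * σ'))
    -- the super Ptolemy relations for the quadrilateral with two sides equal to 1
    (hPt1 : e * f = 1 + b * d + sb * sd * (σ * θ))
    (hPt2 : θ' * (se * sf) = θ * (sb * sd) + σ)
    (hPt3 : σ' * (se * sf) = σ * (sb * sd) - θ) :
    (e * f = 1 + b * d + (σ' * (sb * sf)) * (σ * (se * sd)))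
    ∧ ((θ' * (sd * sf)) * e = (θ * (sb * se)) * d + σ * (se * sd))
    ∧ ((σ' * (sb * sf)) * e = (σ * (se * sd)) * b - θ * (sb * se)) := by

  have C3 : ∀ u v : A, (∀ x : A, u * x = x * u) → ∀ x : A, u*(v*x) = v*(u*x) := by
    intro u v h x; rw [← mul_assoc, h v, mul_assoc]
  have sq3 : ∀ x : A, σ * (σ * x) = 0 := by
    intro x; rw [← mul_assoc, hσ2, zero_mul]
  have key : σ' * (σ * (se * sf)) = -(θ * σ) := by
    have k0 := congrArg (fun x => x * σ) hPt3
    simp only [sub_mul, mul_assoc,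
      hsd sb, hse sb, hse sd, hsf sb, hsf sd, hsf se,
      hsb σ, hsb θ, hsb σ', hsb θ', hsd σ, hsd θ, hsd σ', hsd θ',
      hse σ, hse θ, hse σ', hse θ', hsf σ, hsf θ, hsf σ', hsf θ',
      C3 sd sb hsd, C3 se sb hse, C3 se sd hse, C3 sf sb hsf, C3 sf sd hsf, C3 sf se hsf,
      C3 sb σ hsb, C3 sb θ hsb, C3 sb σ' hsb, C3 sb θ' hsb,
      C3 sd σ hsd, C3 sd θ hsd, C3 sd σ' hsd, C3 sd θ' hsd,
      C3 se σ hse, C3 se θ hse, C3 se σ' hse, C3 se θ' hse,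
      C3 sf σ hsf, C3 sf θ hsf, C3 sf σ' hsf, C3 sf θ' hsf,
      sq3, hσ2, mul_zero, zero_mul, zero_sub] at k0
    exact k0
  refine ⟨?_, ?_, ?_⟩
  · rw [hPt1, hσθ]
    congr 1
    rw [← key]
    simp only [mul_assoc,
      hsd sb, hse sb, hse sd, hsf sb, hsf sd, hsf se,
      hsb σ, hsb θ, hsb σ', hsb θ', hsd σ, hsd θ, hsd σ', hsd θ',
      hse σ, hse θ, hse σ', hse θ', hsf σ, hsf θ, hsf σ', hsf θ',
      C3 sd sb hsd, C3 se sb hse, C3 se sd hse, C3 sf sb hsf, C3 sf sd hsf, C3 sf se hsf,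
      C3 sb σ hsb, C3 sb θ hsb, C3 sb σ' hsb, C3 sb θ' hsb,
      C3 sd σ hsd, C3 sd θ hsd, C3 sd σ' hsd, C3 sd θ' hsd,
      C3 se σ hse, C3 se θ hse, C3 se σ' hse, C3 se θ' hse,
      C3 sf σ hsf, C3 sf θ hsf, C3 sf σ' hsf, C3 sf θ' hsf]
  · have h2 := congrArg (fun x => x * (sd * se)) hPt2
    rw [← hse2, ← hsd2]
    simp only [add_mul, mul_assoc,
      hsd sb, hse sb, hse sd, hsf sb, hsf sd, hsf se,
      hsb σ, hsb θ, hsb σ', hsb θ', hsd σ, hsd θ, hsd σ', hsd θ',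
      hse σ, hse θ, hse σ', hse θ', hsf σ, hsf θ, hsf σ', hsf θ',
      C3 sd sb hsd, C3 se sb hse, C3 se sd hse, C3 sf sb hsf, C3 sf sd hsf, C3 sf se hsf,
      C3 sb σ hsb, C3 sb θ hsb, C3 sb σ' hsb, C3 sb θ' hsb,
      C3 sd σ hsd, C3 sd θ hsd, C3 sd σ' hsd, C3 sd θ' hsd,
      C3 se σ hse, C3 se θ hse, C3 se σ' hse, C3 se θ' hse,
      C3 sf σ hsf, C3 sf θ hsf, C3 sf σ' hsf, C3 sf θ' hsf] at h2 ⊢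
    exact h2
  · have h3 := congrArg (fun x => x * (sb * se)) hPt3
    rw [← hse2, ← hsb2]
    simp only [sub_mul, mul_assoc,
      hsd sb, hse sb, hse sd, hsf sb, hsf sd, hsf se,
      hsb σ, hsb θ, hsb σ', hsb θ', hsd σ, hsd θ, hsd σ', hsd θ',
      hse σ, hse θ, hse σ', hse θ', hsf σ, hsf θ, hsf σ', hsf θ',
      C3 sd sb hsd, C3 se sb hse, C3 se sd hse, C3 sf sb hsf, C3 sf sd hsf, C3 sf se hsf,
      C3 sb σ hsb, C3 sb θ hsb, C3 sb σ' hsb, C3 sb θ' hsb,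
      C3 sd σ hsd, C3 sd θ hsd, C3 sd σ' hsd, C3 sd θ' hsd,
      C3 se σ hse, C3 se θ hse, C3 se σ' hse, C3 se θ' hse,
      C3 sf σ hsf, C3 sf θ hsf, C3 sf σ' hsf, C3 sf θ' hsf] at h3 ⊢
    exact h3
end

section
/- In the pentagon flip sequence (with sides a, b, c, d, e, diagonals x_1, x_2, odd μ-invariants θ_1, θ_2, θ_3, and the first three flips defined by x_1x_3 = ad + ex_2 + √(adex_2)θ_1θ_2, θ_4 = (√(ad)θ_1 − √(ex_2)θ_2)/√(x_1x_3), θ_5 = (√(ad)θ_2 + √(ex_2)θ_1)/√(x_1x_3); x_2x_4 = ac + bx_3 + √(acbx_3)θ_5θ_3, θ_7 = (√(ac)θ_5 − √(bx_3)θ_3)/√(x_2x_4); x_3x_5 = ce + dx_4 + √(cdex_4)θ_4θ_7), the λ-length obtained after the third flip has the closed form x_5 = (bd + c·x_1)·x_2⁻¹ + b·x_1·θ̃_2·θ̃_3, where θ̃_2 = √(d/(x_1x_2))·θ_2 and θ̃_3 = √(c/(b x_2))·θ_3. -/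
lemma pentagon_aux {R A : Type*} [CommRing R] [Ring A] [Algebra R A]
    (sa sb sc sd se s1 s2 s3 s4 : R) (θ1 θ2 θ3 θ4 θ5 θ7 x5 : A)
    (h11 : θ1*θ1 = 0) (h22 : θ2*θ2 = 0)
    (h21 : θ2*θ1 = -(θ1*θ2))
    (F1a : (s1*s1*(s3*s3)) • (1:A)
        = (sa*sa*(sd*sd) + se*se*(s2*s2)) • (1:A) + (sa*sd*(se*s2)) • (θ1*θ2))
    (F1b : (s1*s3) • θ4 = (sa*sd) • θ1 - (se*s2) • θ2)
    (F1c : (s1*s3) • θ5 = (sa*sd) • θ2 + (se*s2) • θ1)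
    (F2a : (s2*s2*(s4*s4)) • (1:A)
        = (sa*sa*(sc*sc) + sb*sb*(s3*s3)) • (1:A) + (sa*sc*(sb*s3)) • (θ5*θ3))
    (F2c : (s2*s4) • θ7 = (sa*sc) • θ5 - (sb*s3) • θ3)
    (F3a : (s3*s3) • x5
        = (sc*sc*(se*se) + sd*sd*(s4*s4)) • (1:A) + (sc*sd*(se*s4)) • (θ4*θ7)) :
    (s1*s1*(s3*s3)*(s2*s2)*(s3*s3)) • x5
      = (s1*s1*(s3*s3)) • ((sc*sc*(s1*s1*(s3*s3)) + sb*sb*(sd*sd)*(s3*s3)) • (1:A)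
          + (sb*sc*sd*s1*(s3*s3)) • (θ2*θ3)) := by
  have e1 : θ2*(θ1*θ2) = 0 := by
    rw [← mul_assoc, h21, neg_mul, mul_assoc, h22, mul_zero, neg_zero]
  have h1212 : (θ1*θ2)*(θ1*θ2) = 0 := by rw [mul_assoc θ1 θ2, e1, mul_zero]
  have e2 : θ2*(θ2*θ3) = 0 := by rw [← mul_assoc, h22, zero_mul]
  have h1223 : (θ1*θ2)*(θ2*θ3) = 0 := by rw [mul_assoc θ1 θ2, e2, mul_zero]
  have hA : (s1*s1*(s3*s3)) • (θ4*θ5)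
      = (sa*sa*(sd*sd) + se*se*(s2*s2)) • (θ1*θ2) := by
    calc (s1*s1*(s3*s3)) • (θ4*θ5)
        = ((s1*s3) • θ4) * ((s1*s3) • θ5) := by rw [smul_mul_smul_comm]; module
      _ = ((sa*sd) • θ1 - (se*s2) • θ2) * ((sa*sd) • θ2 + (se*s2) • θ1) := by
          rw [F1b, F1c]
      _ = (sa*sd*(sa*sd)) • (θ1*θ2) + (sa*sd*(se*s2)) • (θ1*θ1)
            - ((se*s2*(sa*sd)) • (θ2*θ2) + (se*s2*(se*s2)) • (θ2*θ1)) := by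
          rw [sub_mul, mul_add, mul_add]
          simp only [smul_mul_smul_comm]
      _ = (sa*sa*(sd*sd) + se*se*(s2*s2)) • (θ1*θ2) := by
          rw [h11, h22, h21]; simp only [smul_zero, smul_neg]; module
  have hB : (s1*s3) • (θ4*θ3) = (sa*sd) • (θ1*θ3) - (se*s2) • (θ2*θ3) := by
    rw [← smul_mul_assoc, F1b, sub_mul, smul_mul_assoc, smul_mul_assoc]
  have hC : (s1*s3) • (θ5*θ3) = (sa*sd) • (θ2*θ3) + (se*s2) • (θ1*θ3) := by
    rw [← smul_mul_assoc, F1c, add_mul, smul_mul_assoc, smul_mul_assoc]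
  have hD : (s1*s3*(s1*s3*(s2*s4))) • (θ4*θ7)
      = ((sa*sc)*(sa*sa*(sd*sd) + se*se*(s2*s2))) • (θ1*θ2)
        - ((sb*s3)*(s1*s3)*(sa*sd)) • (θ1*θ3)
        + ((sb*s3)*(s1*s3)*(se*s2)) • (θ2*θ3) := by
    calc (s1*s3*(s1*s3*(s2*s4))) • (θ4*θ7)
        = (s1*s3) • (((s1*s3) • θ4) * ((s2*s4) • θ7)) := by
          rw [smul_mul_smul_comm, smul_smul]
      _ = (s1*s3) • (((s1*s3) • θ4) * ((sa*sc) • θ5 - (sb*s3) • θ3)) := by rw [F2c]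
      _ = (sa*sc) • ((s1*s1*(s3*s3)) • (θ4*θ5))
            - (sb*s3*(s1*s3)) • ((s1*s3) • (θ4*θ3)) := by
          rw [mul_sub]
          simp only [mul_smul_comm, smul_mul_assoc]
          module
      _ = (sa*sc) • ((sa*sa*(sd*sd) + se*se*(s2*s2)) • (θ1*θ2))
            - (sb*s3*(s1*s3)) • ((sa*sd) • (θ1*θ3) - (se*s2) • (θ2*θ3)) := by
          rw [hA, hB]
      _ = ((sa*sc)*(sa*sa*(sd*sd) + se*se*(s2*s2))) • (θ1*θ2)
            - ((sb*s3)*(s1*s3)*(sa*sd)) • (θ1*θ3)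
            + ((sb*s3)*(s1*s3)*(se*s2)) • (θ2*θ3) := by module
  have hF12 : (sa*sa*(sd*sd) + se*se*(s2*s2)) • (θ1*θ2)
      = (s1*s1*(s3*s3)) • (θ1*θ2) := by
    have t := congrArg (fun z => z * (θ1*θ2)) F1a
    simp only [add_mul, smul_mul_assoc, one_mul] at t
    rw [h1212, smul_zero, add_zero] at t
    exact t.symm
  have hF23 : (sa*sa*(sd*sd) + se*se*(s2*s2)) • (θ2*θ3)
      = (s1*s1*(s3*s3)) • (θ2*θ3) := by
    have t := congrArg (fun z => z * (θ2*θ3)) F1a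
    simp only [add_mul, smul_mul_assoc, one_mul] at t
    rw [h1223, smul_zero, add_zero] at t
    exact t.symm
  have hL : (s1*s1*(s3*s3)*(s2*s2)*(s3*s3)) • x5
      = (s1*s1*(s3*s3)*(s2*s2)*(sc*sc*(se*se))
          + s1*s1*(s3*s3)*(sd*sd)*(sa*sa*(sc*sc) + sb*sb*(s3*s3))) • (1:A)
        + (sc*sd*se*s2*(sa*sc)) • ((s1*s1*(s3*s3)) • (θ1*θ2))
        + (sb*sc*sd*s3*(s1*s3)) • ((s1*s1*(s3*s3)) • (θ2*θ3)) := by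
    calc (s1*s1*(s3*s3)*(s2*s2)*(s3*s3)) • x5
        = (s1*s1*(s3*s3)*(s2*s2)) • ((s3*s3) • x5) := by module
      _ = (s1*s1*(s3*s3)*(s2*s2)) • ((sc*sc*(se*se) + sd*sd*(s4*s4)) • (1:A)
            + (sc*sd*(se*s4)) • (θ4*θ7)) := by rw [F3a]
      _ = (s1*s1*(s3*s3)*(s2*s2)*(sc*sc*(se*se))) • (1:A)
            + (s1*s1*(s3*s3)*(sd*sd)) • ((s2*s2*(s4*s4)) • (1:A))
            + (sc*sd*se*s2) • ((s1*s3*(s1*s3*(s2*s4))) • (θ4*θ7)) := by module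
      _ = (s1*s1*(s3*s3)*(s2*s2)*(sc*sc*(se*se))) • (1:A)
            + (s1*s1*(s3*s3)*(sd*sd)) • ((sa*sa*(sc*sc) + sb*sb*(s3*s3)) • (1:A)
                + (sa*sc*(sb*s3)) • (θ5*θ3))
            + (sc*sd*se*s2) • (((sa*sc)*(sa*sa*(sd*sd) + se*se*(s2*s2))) • (θ1*θ2)
                - ((sb*s3)*(s1*s3)*(sa*sd)) • (θ1*θ3)
                + ((sb*s3)*(s1*s3)*(se*s2)) • (θ2*θ3)) := by rw [F2a, hD]
      _ = (s1*s1*(s3*s3)*(s2*s2)*(sc*sc*(se*se))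
            + s1*s1*(s3*s3)*(sd*sd)*(sa*sa*(sc*sc) + sb*sb*(s3*s3))) • (1:A)
            + (sd*sd*(sa*sc*(sb*s3))*(s1*s3)) • ((s1*s3) • (θ5*θ3))
            + (sc*sd*se*s2) • (((sa*sc)*(sa*sa*(sd*sd) + se*se*(s2*s2))) • (θ1*θ2)
                - ((sb*s3)*(s1*s3)*(sa*sd)) • (θ1*θ3)
                + ((sb*s3)*(s1*s3)*(se*s2)) • (θ2*θ3)) := by module
      _ = (s1*s1*(s3*s3)*(s2*s2)*(sc*sc*(se*se))
            + s1*s1*(s3*s3)*(sd*sd)*(sa*sa*(sc*sc) + sb*sb*(s3*s3))) • (1:A)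
            + (sd*sd*(sa*sc*(sb*s3))*(s1*s3)) • ((sa*sd) • (θ2*θ3) + (se*s2) • (θ1*θ3))
            + (sc*sd*se*s2) • (((sa*sc)*(sa*sa*(sd*sd) + se*se*(s2*s2))) • (θ1*θ2)
                - ((sb*s3)*(s1*s3)*(sa*sd)) • (θ1*θ3)
                + ((sb*s3)*(s1*s3)*(se*s2)) • (θ2*θ3)) := by rw [hC]
      _ = (s1*s1*(s3*s3)*(s2*s2)*(sc*sc*(se*se))
            + s1*s1*(s3*s3)*(sd*sd)*(sa*sa*(sc*sc) + sb*sb*(s3*s3))) • (1:A)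
            + (sc*sd*se*s2*(sa*sc)) • ((sa*sa*(sd*sd) + se*se*(s2*s2)) • (θ1*θ2))
            + (sb*sc*sd*s3*(s1*s3)) • ((sa*sa*(sd*sd) + se*se*(s2*s2)) • (θ2*θ3)) := by
          module
      _ = (s1*s1*(s3*s3)*(s2*s2)*(sc*sc*(se*se))
            + s1*s1*(s3*s3)*(sd*sd)*(sa*sa*(sc*sc) + sb*sb*(s3*s3))) • (1:A)
            + (sc*sd*se*s2*(sa*sc)) • ((s1*s1*(s3*s3)) • (θ1*θ2))
            + (sb*sc*sd*s3*(s1*s3)) • ((s1*s1*(s3*s3)) • (θ2*θ3)) := by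
          rw [hF12, hF23]
  have hR : (s1*s1*(s3*s3)) • ((sc*sc*(s1*s1*(s3*s3)) + sb*sb*(sd*sd)*(s3*s3)) • (1:A)
          + (sb*sc*sd*s1*(s3*s3)) • (θ2*θ3))
      = (sc*sc*(s1*s1*(s3*s3))) • ((sa*sa*(sd*sd) + se*se*(s2*s2)) • (1:A)
            + (sa*sd*(se*s2)) • (θ1*θ2))
        + (s1*s1*(s3*s3)*(sb*sb*(sd*sd)*(s3*s3))) • (1:A)
        + (s1*s1*(s3*s3)*(sb*sc*sd*s1*(s3*s3))) • (θ2*θ3) := by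
    rw [← F1a]; module
  rw [hL, hR]
  module


/-- key intermediate identity in the pentagon relation; appendix
of the paper.  With the same setup as the pentagon flip sequence — a `ℚ`-algebra
with a positive cone `Pos` of central invertible even elements and a coherent
multiplicative choice of square roots `sqrt` on it — the `λ`-length obtained
after the third flip has the closed form
`x₅ = (bd + c·x₁)·x₂⁻¹ + b·x₁·θ̃₂·θ̃₃`, where `θ̃₂ = √(d/(x₁x₂))·θ₂` and
`θ̃₃ = √(c/(b·x₂))·θ₃`. -/
theorem pentagon_third_flip_closed_form
    (A : Type*) [Ring A] [Algebra ℚ A]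
    (Pos : Set A) (sqrt : A → A)
    (hPosAdd : ∀ p ∈ Pos, ∀ q ∈ Pos, p + q ∈ Pos)
    (hPosMul : ∀ p ∈ Pos, ∀ q ∈ Pos, p * q ∈ Pos)
    (hPosInv : ∀ p ∈ Pos, Ring.inverse p ∈ Pos)
    (hPosCentral : ∀ p ∈ Pos, ∀ x : A, p * x = x * p)
    (hPosUnit : ∀ p ∈ Pos, IsUnit p)
    (hsqrtSq : ∀ p ∈ Pos, sqrt p * sqrt p = p)
    (hsqrtMem : ∀ p ∈ Pos, sqrt p ∈ Pos)
    (hsqrtMul : ∀ p ∈ Pos, ∀ q ∈ Pos, sqrt (p * q) = sqrt p * sqrt q)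
    (a b c d e x1 x2 x3 x4 x5 : A)
    (haP : a ∈ Pos) (hbP : b ∈ Pos) (hcP : c ∈ Pos) (hdP : d ∈ Pos) (heP : e ∈ Pos)
    (hx1 : x1 ∈ Pos) (hx2 : x2 ∈ Pos) (hx3 : x3 ∈ Pos) (hx4 : x4 ∈ Pos)
    (hx5 : x5 ∈ Pos)
    (θ1 θ2 θ3 : A)
    (h11 : θ1 * θ1 = 0) (h22 : θ2 * θ2 = 0) (h33 : θ3 * θ3 = 0)
    (h12 : θ1 * θ2 = -(θ2 * θ1)) (h13 : θ1 * θ3 = -(θ3 * θ1))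
    (h23 : θ2 * θ3 = -(θ3 * θ2))
    (θ4 θ5 θ7 : A)
    -- first flip (of x₁)
    (flip1a : x1 * x3 = a * d + e * x2 + sqrt (a * d * e * x2) * (θ1 * θ2))
    (flip1b : θ4 * sqrt (x1 * x3) = sqrt (a * d) * θ1 - sqrt (e * x2) * θ2)
    (flip1c : θ5 * sqrt (x1 * x3) = sqrt (a * d) * θ2 + sqrt (e * x2) * θ1)
    -- second flip (of x₂)
    (flip2a : x2 * x4 = a * c + b * x3 + sqrt (a * c * b * x3) * (θ5 * θ3))
    (flip2c : θ7 * sqrt (x2 * x4) = sqrt (a * c) * θ5 - sqrt (b * x3) * θ3)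
    -- third flip (of x₃)
    (flip3a : x3 * x5 = c * e + d * x4 + sqrt (c * d * e * x4) * (θ4 * θ7)) :
    x5 = (b * d + c * x1) * Ring.inverse x2
          + b * x1 * ((sqrt (d * Ring.inverse (x1 * x2)) * θ2)
              * (sqrt (c * Ring.inverse (b * x2)) * θ3)) := by
  have memC : ∀ p ∈ Pos, p ∈ Subring.center A := fun p hp =>
    Subring.mem_center_iff.mpr fun g => (hPosCentral p hp g).symm
  -- positivity bookkeeping
  have hadP : a*d ∈ Pos := hPosMul _ haP _ hdP
  have hadeP : a*d*e ∈ Pos := hPosMul _ hadP _ heP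
  have hex2P : e*x2 ∈ Pos := hPosMul _ heP _ hx2
  have hx13P : x1*x3 ∈ Pos := hPosMul _ hx1 _ hx3
  have hacP : a*c ∈ Pos := hPosMul _ haP _ hcP
  have hacbP : a*c*b ∈ Pos := hPosMul _ hacP _ hbP
  have hbx3P : b*x3 ∈ Pos := hPosMul _ hbP _ hx3
  have hx24P : x2*x4 ∈ Pos := hPosMul _ hx2 _ hx4
  have hcdP : c*d ∈ Pos := hPosMul _ hcP _ hdP
  have hcdeP : c*d*e ∈ Pos := hPosMul _ hcdP _ heP
  have hx12P : x1*x2 ∈ Pos := hPosMul _ hx1 _ hx2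
  have hbx2P : b*x2 ∈ Pos := hPosMul _ hbP _ hx2
  have hi12P : Ring.inverse (x1*x2) ∈ Pos := hPosInv _ hx12P
  have hdi12P : d * Ring.inverse (x1*x2) ∈ Pos := hPosMul _ hdP _ hi12P
  have hib2P : Ring.inverse (b*x2) ∈ Pos := hPosInv _ hbx2P
  have hcib2P : c * Ring.inverse (b*x2) ∈ Pos := hPosMul _ hcP _ hib2P
  -- center memberships of the square roots
  have msa := memC _ (hsqrtMem _ haP)
  have msb := memC _ (hsqrtMem _ hbP)
  have msc := memC _ (hsqrtMem _ hcP)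
  have msd := memC _ (hsqrtMem _ hdP)
  have mse := memC _ (hsqrtMem _ heP)
  have ms1 := memC _ (hsqrtMem _ hx1)
  have ms2 := memC _ (hsqrtMem _ hx2)
  have ms3 := memC _ (hsqrtMem _ hx3)
  have ms4 := memC _ (hsqrtMem _ hx4)
  have h21' : θ2 * θ1 = -(θ1 * θ2) := by rw [h12, neg_neg]
  -- translated flip identities
  have F1a'' : sqrt x1*sqrt x1*(sqrt x3*sqrt x3)*1
      = (sqrt a*sqrt a*(sqrt d*sqrt d) + sqrt e*sqrt e*(sqrt x2*sqrt x2))*1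
        + sqrt a*sqrt d*(sqrt e*sqrt x2)*(θ1*θ2) := by
    rw [hsqrtSq _ hx1, hsqrtSq _ hx3, hsqrtSq _ haP, hsqrtSq _ hdP, hsqrtSq _ heP,
      hsqrtSq _ hx2]
    simp only [mul_one]
    rw [flip1a, hsqrtMul _ hadeP _ hx2, hsqrtMul _ hadP _ heP, hsqrtMul _ haP _ hdP,
      mul_assoc (sqrt a * sqrt d)]
  have F1b'' : sqrt x1*sqrt x3*θ4 = sqrt a*sqrt d*θ1 - sqrt e*sqrt x2*θ2 := by
    rw [← hsqrtMul _ haP _ hdP, ← hsqrtMul _ heP _ hx2, ← hsqrtMul _ hx1 _ hx3, ← flip1b]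
    exact hPosCentral _ (hsqrtMem _ hx13P) θ4
  have F1c'' : sqrt x1*sqrt x3*θ5 = sqrt a*sqrt d*θ2 + sqrt e*sqrt x2*θ1 := by
    rw [← hsqrtMul _ haP _ hdP, ← hsqrtMul _ heP _ hx2, ← hsqrtMul _ hx1 _ hx3, ← flip1c]
    exact hPosCentral _ (hsqrtMem _ hx13P) θ5
  have F2a'' : sqrt x2*sqrt x2*(sqrt x4*sqrt x4)*1
      = (sqrt a*sqrt a*(sqrt c*sqrt c) + sqrt b*sqrt b*(sqrt x3*sqrt x3))*1
        + sqrt a*sqrt c*(sqrt b*sqrt x3)*(θ5*θ3) := by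
    rw [hsqrtSq _ hx2, hsqrtSq _ hx4, hsqrtSq _ haP, hsqrtSq _ hcP, hsqrtSq _ hbP,
      hsqrtSq _ hx3]
    simp only [mul_one]
    rw [flip2a, hsqrtMul _ hacbP _ hx3, hsqrtMul _ hacP _ hbP, hsqrtMul _ haP _ hcP,
      mul_assoc (sqrt a * sqrt c)]
  have F2c'' : sqrt x2*sqrt x4*θ7 = sqrt a*sqrt c*θ5 - sqrt b*sqrt x3*θ3 := by
    rw [← hsqrtMul _ haP _ hcP, ← hsqrtMul _ hbP _ hx3, ← hsqrtMul _ hx2 _ hx4, ← flip2c]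
    exact hPosCentral _ (hsqrtMem _ hx24P) θ7
  have F3a'' : sqrt x3*sqrt x3*x5
      = (sqrt c*sqrt c*(sqrt e*sqrt e) + sqrt d*sqrt d*(sqrt x4*sqrt x4))*1
        + sqrt c*sqrt d*(sqrt e*sqrt x4)*(θ4*θ7) := by
    rw [hsqrtSq _ hx3, hsqrtSq _ hcP, hsqrtSq _ heP, hsqrtSq _ hdP, hsqrtSq _ hx4]
    simp only [mul_one]
    rw [flip3a, hsqrtMul _ hcdeP _ hx4, hsqrtMul _ hcdP _ heP, hsqrtMul _ hcP _ hdP,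
      mul_assoc (sqrt c * sqrt d)]
  have KEY := pentagon_aux (R := Subring.center A) (A := A)
    ⟨sqrt a, msa⟩ ⟨sqrt b, msb⟩ ⟨sqrt c, msc⟩ ⟨sqrt d, msd⟩ ⟨sqrt e, mse⟩
    ⟨sqrt x1, ms1⟩ ⟨sqrt x2, ms2⟩ ⟨sqrt x3, ms3⟩ ⟨sqrt x4, ms4⟩
    θ1 θ2 θ3 θ4 θ5 θ7 x5 h11 h22 h21' F1a'' F1b'' F1c'' F2a'' F2c'' F3a''
  have KEY'' : sqrt x1*sqrt x1*(sqrt x3*sqrt x3)*(sqrt x2*sqrt x2)*(sqrt x3*sqrt x3)*x5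
      = sqrt x1*sqrt x1*(sqrt x3*sqrt x3)
          * ((sqrt c*sqrt c*(sqrt x1*sqrt x1*(sqrt x3*sqrt x3))
                + sqrt b*sqrt b*(sqrt d*sqrt d)*(sqrt x3*sqrt x3))*1
             + sqrt b*sqrt c*sqrt d*sqrt x1*(sqrt x3*sqrt x3)*(θ2*θ3)) := KEY
  rw [hsqrtSq _ hx1, hsqrtSq _ hx2, hsqrtSq _ hx3, hsqrtSq _ hcP, hsqrtSq _ hbP,
    hsqrtSq _ hdP] at KEY''
  simp only [mul_one] at KEY''
  -- scalar identities in the center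
  have hb' : (⟨sqrt b, msb⟩ : Subring.center A) * ⟨sqrt b, msb⟩ = ⟨b, memC _ hbP⟩ :=
    Subtype.ext (hsqrtSq _ hbP)
  have h1' : (⟨sqrt x1, ms1⟩ : Subring.center A) * ⟨sqrt x1, ms1⟩ = ⟨x1, memC _ hx1⟩ :=
    Subtype.ext (hsqrtSq _ hx1)
  have h2' : (⟨sqrt x2, ms2⟩ : Subring.center A) * ⟨sqrt x2, ms2⟩ = ⟨x2, memC _ hx2⟩ :=
    Subtype.ext (hsqrtSq _ hx2)
  have c1 : (⟨x2, memC _ hx2⟩ : Subring.center A) * ⟨Ring.inverse x2, memC _ (hPosInv _ hx2)⟩ = 1 :=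
    Subtype.ext (Ring.mul_inverse_cancel x2 (hPosUnit x2 hx2))
  have c2 : (⟨sqrt (d * Ring.inverse (x1*x2)), memC _ (hsqrtMem _ hdi12P)⟩ : Subring.center A)
        * (⟨sqrt x1, ms1⟩ * ⟨sqrt x2, ms2⟩) = ⟨sqrt d, msd⟩ := by
    refine Subtype.ext ?_
    show sqrt (d * Ring.inverse (x1*x2)) * (sqrt x1 * sqrt x2) = sqrt d
    rw [← hsqrtMul _ hx1 _ hx2, ← hsqrtMul _ hdi12P _ hx12P, mul_assoc,
      Ring.inverse_mul_cancel _ (hPosUnit _ hx12P), mul_one]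
  have c3 : (⟨sqrt (c * Ring.inverse (b*x2)), memC _ (hsqrtMem _ hcib2P)⟩ : Subring.center A)
        * (⟨sqrt b, msb⟩ * ⟨sqrt x2, ms2⟩) = ⟨sqrt c, msc⟩ := by
    refine Subtype.ext ?_
    show sqrt (c * Ring.inverse (b*x2)) * (sqrt b * sqrt x2) = sqrt c
    rw [← hsqrtMul _ hbP _ hx2, ← hsqrtMul _ hcib2P _ hbx2P, mul_assoc,
      Ring.inverse_mul_cancel _ (hPosUnit _ hbx2P), mul_one]
  -- even part of the bridge
  have sEven : (⟨x1, memC _ hx1⟩ : Subring.center A) * ⟨x3, memC _ hx3⟩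
        * (⟨c, memC _ hcP⟩ * (⟨x1, memC _ hx1⟩ * ⟨x3, memC _ hx3⟩)
            + ⟨b, memC _ hbP⟩ * ⟨d, memC _ hdP⟩ * ⟨x3, memC _ hx3⟩)
      = ⟨x1, memC _ hx1⟩ * ⟨x3, memC _ hx3⟩ * ⟨x2, memC _ hx2⟩ * ⟨x3, memC _ hx3⟩
        * ((⟨b, memC _ hbP⟩ * ⟨d, memC _ hdP⟩ + ⟨c, memC _ hcP⟩ * ⟨x1, memC _ hx1⟩)
            * ⟨Ring.inverse x2, memC _ (hPosInv _ hx2)⟩) := by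
    linear_combination (-(⟨x1, memC _ hx1⟩ * ⟨x3, memC _ hx3⟩ * ⟨x3, memC _ hx3⟩
      * (⟨b, memC _ hbP⟩ * ⟨d, memC _ hdP⟩ + ⟨c, memC _ hcP⟩ * ⟨x1, memC _ hx1⟩))) * c1
  have evenEq : x1*x3*(c*(x1*x3) + b*d*x3)
      = x1*x3*x2*x3*((b*d + c*x1)*Ring.inverse x2) := congrArg Subtype.val sEven
  -- odd part of the bridge
  have sOdd : (⟨x1, memC _ hx1⟩ : Subring.center A) * ⟨x3, memC _ hx3⟩
        * (⟨sqrt b, msb⟩ * ⟨sqrt c, msc⟩ * ⟨sqrt d, msd⟩ * ⟨sqrt x1, ms1⟩ * ⟨x3, memC _ hx3⟩)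
      = ⟨x1, memC _ hx1⟩ * ⟨x3, memC _ hx3⟩ * ⟨x2, memC _ hx2⟩ * ⟨x3, memC _ hx3⟩
        * (⟨b, memC _ hbP⟩ * ⟨x1, memC _ hx1⟩
            * (⟨sqrt (d * Ring.inverse (x1*x2)), memC _ (hsqrtMem _ hdi12P)⟩
                * ⟨sqrt (c * Ring.inverse (b*x2)), memC _ (hsqrtMem _ hcib2P)⟩)) := by
    rw [← hb', ← h1', ← h2', ← c2, ← c3]; ring
  have scalarOdd : x1*x3*(sqrt b*sqrt c*sqrt d*sqrt x1*x3)
      = x1*x3*x2*x3*(b*x1*(sqrt (d * Ring.inverse (x1*x2)) * sqrt (c * Ring.inverse (b*x2)))) :=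
    congrArg Subtype.val sOdd
  have hmove : (sqrt (d * Ring.inverse (x1*x2)) * θ2) * (sqrt (c * Ring.inverse (b*x2)) * θ3)
      = (sqrt (d * Ring.inverse (x1*x2)) * sqrt (c * Ring.inverse (b*x2))) * (θ2*θ3) := by
    rw [mul_assoc (sqrt (d * Ring.inverse (x1*x2))) θ2,
      ← mul_assoc θ2 (sqrt (c * Ring.inverse (b*x2))) θ3,
      ← hPosCentral _ (hsqrtMem _ hcib2P) θ2,
      mul_assoc (sqrt (c * Ring.inverse (b*x2))) θ2 θ3,
      ← mul_assoc]
  have oddEq : x1*x3*(sqrt b*sqrt c*sqrt d*sqrt x1*x3*(θ2*θ3))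
      = x1*x3*x2*x3*(b*x1*((sqrt (d * Ring.inverse (x1*x2)) * θ2)
          * (sqrt (c * Ring.inverse (b*x2)) * θ3))) := by
    rw [hmove, ← mul_assoc (b*x1), ← mul_assoc (x1*x3*x2*x3),
      ← mul_assoc (x1*x3), scalarOdd]
  have bridge : x1*x3*x2*x3*((b * d + c * x1) * Ring.inverse x2
          + b * x1 * ((sqrt (d * Ring.inverse (x1 * x2)) * θ2)
              * (sqrt (c * Ring.inverse (b * x2)) * θ3)))
      = x1*x3*(c*(x1*x3) + b*d*x3 + sqrt b*sqrt c*sqrt d*sqrt x1*x3*(θ2*θ3)) := by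
    rw [mul_add, ← evenEq, ← oddEq, ← mul_add]
  exact (hPosUnit _ (hPosMul _ (hPosMul _ (hPosMul _ hx1 _ hx3) _ hx2) _ hx3)).mul_left_cancel
    (KEY''.trans bridge.symm)
end

section
/- In the pentagon flip sequence (with sides a, b, c, d, e, diagonals x_1, x_2, odd μ-invariants θ_1, θ_2, θ_3, first flip x_1x_3 = ad + ex_2 + √(adex_2)θ_1θ_2 with θ_5 = (√(ad)θ_2 + √(ex_2)θ_1)/√(x_1x_3), and second flip x_2x_4 = ac + bx_3 + √(acbx_3)θ_5θ_3 with θ_6 = (√(ac)θ_3 + √(bx_3)θ_5)/√(x_2x_4)), the following closed forms hold after the second flip: x_4 = (ac·x_1 + abd + be·x_2)·(x_1x_2)⁻¹ + ab·(θ̃_1θ̃_2 + θ̃_1θ̃_3 + θ̃_2θ̃_3) and θ_6·√(x_4) = √(ab)·(θ̃_1 + θ̃_2 + θ̃_3), where θ̃_1 = √(e/(a x_1))·θ_1, θ̃_2 = √(d/(x_1x_2))·θ_2, θ̃_3 = √(c/(b x_2))·θ_3. -/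
private lemma pent_aux1 {R : Type*} [CommRing R] (x1 sa sb sc s1 s3 : R)
    (r1 : s1 * s1 = x1) :
    x1 * (sa * sc * sb * s3) = sa * sb * sc * s1 * (s1 * s3) := by
  rw [← r1]; ring

private lemma pent_aux3 {R : Type*} [CommRing R] (a b c d e x1 x2 i12 : R)
    (ri : i12 * (x1 * x2) = 1) :
    x1 * x2 * ((a * c * x1 + a * b * d + b * e * x2) * i12)
      = a * c * x1 + a * b * d + b * e * x2 := by
  linear_combination (a * c * x1 + a * b * d + b * e * x2) * ri

private lemma pent_aux4 {R : Type*} [CommRing R] (a b x1 x2 sa sd se s1 s2 ja j12 : R)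
    (ra : sa * sa = a) (r1 : s1 * s1 = x1) (r2 : s2 * s2 = x2)
    (rja : ja * (sa * s1) = 1) (rj12 : j12 * (s1 * s2) = 1) :
    x1 * x2 * (a * b * ((se * ja) * (sd * j12))) = b * (sa * sd * se * s2) := by
  rw [← ra, ← r1, ← r2]
  linear_combination (b*sa*sd*se*s2*(j12*(s1*s2)))*rja + (b*sa*sd*se*s2)*rj12

private lemma pent_aux5 {R : Type*} [CommRing R] (a b x1 x2 sa sb sc se s1 s2 ja jb : R)
    (ra : sa * sa = a) (rb : sb * sb = b) (r1 : s1 * s1 = x1) (r2 : s2 * s2 = x2)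
    (rja : ja * (sa * s1) = 1) (rjb : jb * (sb * s2) = 1) :
    x1 * x2 * (a * b * ((se * ja) * (sc * jb))) = sa * sb * sc * s1 * (se * s2) := by
  rw [← ra, ← rb, ← r1, ← r2]
  linear_combination (sa*sb*sc*se*s1*s2*(jb*(sb*s2)))*rja + (sa*sb*sc*se*s1*s2)*rjb

private lemma pent_aux6 {R : Type*} [CommRing R] (a b x1 x2 sa sb sc sd s1 s2 j12 jb : R)
    (ra : sa * sa = a) (rb : sb * sb = b) (r1 : s1 * s1 = x1) (r2 : s2 * s2 = x2)
    (rj12 : j12 * (s1 * s2) = 1) (rjb : jb * (sb * s2) = 1) :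
    x1 * x2 * (a * b * ((sd * j12) * (sc * jb))) = sa * sb * sc * s1 * (sa * sd) := by
  rw [← ra, ← rb, ← r1, ← r2]
  linear_combination (sa*sa*sb*sc*sd*s1*(jb*(sb*s2)))*rj12 + (sa*sa*sb*sc*sd*s1)*rjb

private lemma pent_aux7 {R : Type*} [CommRing R] (sa sb se s1 s2 ja : R)
    (rja : ja * (sa * s1) = 1) :
    (sa * sb * (se * ja)) * (s2 * s1) = sb * (se * s2) := by
  linear_combination (sb*se*s2)*rja

private lemma pent_aux8 {R : Type*} [CommRing R] (sa sb sd s1 s2 j12 : R)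
    (rj12 : j12 * (s1 * s2) = 1) :
    (sa * sb * (sd * j12)) * (s2 * s1) = sb * (sa * sd) := by
  linear_combination (sa*sb*sd)*rj12

private lemma pent_aux9 {R : Type*} [CommRing R] (sa sb sc s1 s2 jb : R)
    (rjb : jb * (sb * s2) = 1) :
    (sa * sb * (sc * jb)) * (s2 * s1) = sa * sc * s1 := by
  linear_combination (sa*sc*s1)*rjb

/-- closed forms after the second flip of the pentagon relation;
appendix of the paper.  With the same setup as the pentagon flip sequence — a
`ℚ`-algebra with a positive cone `Pos` of central invertible even elements and a
coherent multiplicative choice of square roots `sqrt` on it — after the second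
flip one has
`x₄ = (ac·x₁ + abd + be·x₂)·(x₁x₂)⁻¹ + ab·(θ̃₁θ̃₂ + θ̃₁θ̃₃ + θ̃₂θ̃₃)` and
`θ₆·√x₄ = √(ab)·(θ̃₁ + θ̃₂ + θ̃₃)`, where `θ̃₁ = √(e/(a·x₁))·θ₁`,
`θ̃₂ = √(d/(x₁x₂))·θ₂`, `θ̃₃ = √(c/(b·x₂))·θ₃`. -/
theorem pentagon_second_flip_closed_forms
    (A : Type*) [Ring A] [Algebra ℚ A]
    (Pos : Set A) (sqrt : A → A)
    (hPosAdd : ∀ p ∈ Pos, ∀ q ∈ Pos, p + q ∈ Pos)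
    (hPosMul : ∀ p ∈ Pos, ∀ q ∈ Pos, p * q ∈ Pos)
    (hPosInv : ∀ p ∈ Pos, Ring.inverse p ∈ Pos)
    (hPosCentral : ∀ p ∈ Pos, ∀ x : A, p * x = x * p)
    (hPosUnit : ∀ p ∈ Pos, IsUnit p)
    (hsqrtSq : ∀ p ∈ Pos, sqrt p * sqrt p = p)
    (hsqrtMem : ∀ p ∈ Pos, sqrt p ∈ Pos)
    (hsqrtMul : ∀ p ∈ Pos, ∀ q ∈ Pos, sqrt (p * q) = sqrt p * sqrt q)
    (a b c d e x1 x2 x3 x4 : A)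
    (haP : a ∈ Pos) (hbP : b ∈ Pos) (hcP : c ∈ Pos) (hdP : d ∈ Pos) (heP : e ∈ Pos)
    (hx1 : x1 ∈ Pos) (hx2 : x2 ∈ Pos) (hx3 : x3 ∈ Pos) (hx4 : x4 ∈ Pos)
    (θ1 θ2 θ3 : A)
    (h11 : θ1 * θ1 = 0) (h22 : θ2 * θ2 = 0) (h33 : θ3 * θ3 = 0)
    (h12 : θ1 * θ2 = -(θ2 * θ1)) (h13 : θ1 * θ3 = -(θ3 * θ1))
    (h23 : θ2 * θ3 = -(θ3 * θ2))
    (θ5 θ6 : A)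
    -- first flip (of x₁)
    (flip1a : x1 * x3 = a * d + e * x2 + sqrt (a * d * e * x2) * (θ1 * θ2))
    (flip1c : θ5 * sqrt (x1 * x3) = sqrt (a * d) * θ2 + sqrt (e * x2) * θ1)
    -- second flip (of x₂)
    (flip2a : x2 * x4 = a * c + b * x3 + sqrt (a * c * b * x3) * (θ5 * θ3))
    (flip2b : θ6 * sqrt (x2 * x4) = sqrt (a * c) * θ3 + sqrt (b * x3) * θ5) :
    (x4 = (a * c * x1 + a * b * d + b * e * x2) * Ring.inverse (x1 * x2)
        + a * b * ((sqrt (e * Ring.inverse (a * x1)) * θ1)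
              * (sqrt (d * Ring.inverse (x1 * x2)) * θ2)
            + (sqrt (e * Ring.inverse (a * x1)) * θ1)
              * (sqrt (c * Ring.inverse (b * x2)) * θ3)
            + (sqrt (d * Ring.inverse (x1 * x2)) * θ2)
              * (sqrt (c * Ring.inverse (b * x2)) * θ3)))
    ∧ (θ6 * sqrt x4 = sqrt (a * b)
        * (sqrt (e * Ring.inverse (a * x1)) * θ1
          + sqrt (d * Ring.inverse (x1 * x2)) * θ2
          + sqrt (c * Ring.inverse (b * x2)) * θ3)) := by
  have memC : ∀ p ∈ Pos, p ∈ Subring.center A := fun p hp =>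
    Subring.mem_center_iff.mpr fun g => (hPosCentral p hp g).symm
  -- memberships
  have hax1 : a * x1 ∈ Pos := hPosMul a haP x1 hx1
  have h12P : x1 * x2 ∈ Pos := hPosMul x1 hx1 x2 hx2
  have hbx2 : b * x2 ∈ Pos := hPosMul b hbP x2 hx2
  have hiax1 : Ring.inverse (a * x1) ∈ Pos := hPosInv _ hax1
  have hi12 : Ring.inverse (x1 * x2) ∈ Pos := hPosInv _ h12P
  have hibx2 : Ring.inverse (b * x2) ∈ Pos := hPosInv _ hbx2
  have psa : sqrt a ∈ Pos := hsqrtMem a haP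
  have psb : sqrt b ∈ Pos := hsqrtMem b hbP
  have psc : sqrt c ∈ Pos := hsqrtMem c hcP
  have psd : sqrt d ∈ Pos := hsqrtMem d hdP
  have pse : sqrt e ∈ Pos := hsqrtMem e heP
  have ps1 : sqrt x1 ∈ Pos := hsqrtMem x1 hx1
  have ps2 : sqrt x2 ∈ Pos := hsqrtMem x2 hx2
  have ps3 : sqrt x3 ∈ Pos := hsqrtMem x3 hx3
  have ps4 : sqrt x4 ∈ Pos := hsqrtMem x4 hx4
  have pja : sqrt (Ring.inverse (a * x1)) ∈ Pos := hsqrtMem _ hiax1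
  have pj12 : sqrt (Ring.inverse (x1 * x2)) ∈ Pos := hsqrtMem _ hi12
  have pjb : sqrt (Ring.inverse (b * x2)) ∈ Pos := hsqrtMem _ hibx2
  -- sqrt 1 = 1
  have h1P : (1 : A) ∈ Pos := by
    have h := hPosMul a haP _ (hPosInv a haP)
    rwa [Ring.mul_inverse_cancel a (hPosUnit a haP)] at h
  have sqrt_one : sqrt 1 = 1 := by
    have h := hsqrtMul 1 h1P 1 h1P
    rw [one_mul] at h
    rw [h]
    exact hsqrtSq 1 h1P
  -- unit relations for the square roots of inverses
  have rjaA : sqrt (Ring.inverse (a * x1)) * (sqrt a * sqrt x1) = 1 := by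
    rw [← hsqrtMul a haP x1 hx1, ← hsqrtMul _ hiax1 _ hax1,
      Ring.inverse_mul_cancel _ (hPosUnit _ hax1), sqrt_one]
  have rj12A : sqrt (Ring.inverse (x1 * x2)) * (sqrt x1 * sqrt x2) = 1 := by
    rw [← hsqrtMul x1 hx1 x2 hx2, ← hsqrtMul _ hi12 _ h12P,
      Ring.inverse_mul_cancel _ (hPosUnit _ h12P), sqrt_one]
  have rjbA : sqrt (Ring.inverse (b * x2)) * (sqrt b * sqrt x2) = 1 := by
    rw [← hsqrtMul b hbP x2 hx2, ← hsqrtMul _ hibx2 _ hbx2,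
      Ring.inverse_mul_cancel _ (hPosUnit _ hbx2), sqrt_one]
  have riA : Ring.inverse (x1 * x2) * (x1 * x2) = 1 :=
    Ring.inverse_mul_cancel _ (hPosUnit _ h12P)
  -- atomize the square roots
  have A1 : sqrt (a * d * e * x2) = sqrt a * sqrt d * sqrt e * sqrt x2 := by
    rw [hsqrtMul _ (hPosMul _ (hPosMul a haP d hdP) e heP) _ hx2,
      hsqrtMul _ (hPosMul a haP d hdP) e heP, hsqrtMul a haP d hdP]
  have A2 : sqrt (a * c * b * x3) = sqrt a * sqrt c * sqrt b * sqrt x3 := by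
    rw [hsqrtMul _ (hPosMul _ (hPosMul a haP c hcP) b hbP) _ hx3,
      hsqrtMul _ (hPosMul a haP c hcP) b hbP, hsqrtMul a haP c hcP]
  have A3 : sqrt (x1 * x3) = sqrt x1 * sqrt x3 := hsqrtMul x1 hx1 x3 hx3
  have A4 : sqrt (a * d) = sqrt a * sqrt d := hsqrtMul a haP d hdP
  have A5 : sqrt (e * x2) = sqrt e * sqrt x2 := hsqrtMul e heP x2 hx2
  have A6 : sqrt (a * c) = sqrt a * sqrt c := hsqrtMul a haP c hcP
  have A7 : sqrt (b * x3) = sqrt b * sqrt x3 := hsqrtMul b hbP x3 hx3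
  have A8 : sqrt (x2 * x4) = sqrt x2 * sqrt x4 := hsqrtMul x2 hx2 x4 hx4
  have A9 : sqrt (a * b) = sqrt a * sqrt b := hsqrtMul a haP b hbP
  have A10 : sqrt (e * Ring.inverse (a * x1)) = sqrt e * sqrt (Ring.inverse (a * x1)) :=
    hsqrtMul e heP _ hiax1
  have A11 : sqrt (d * Ring.inverse (x1 * x2)) = sqrt d * sqrt (Ring.inverse (x1 * x2)) :=
    hsqrtMul d hdP _ hi12
  have A12 : sqrt (c * Ring.inverse (b * x2)) = sqrt c * sqrt (Ring.inverse (b * x2)) :=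
    hsqrtMul c hcP _ hibx2
  rw [A1] at flip1a
  rw [A3, A4, A5] at flip1c
  rw [A2] at flip2a
  rw [A8, A6, A7] at flip2b
  -- θ5 against √x1√x3
  have q5 : (sqrt x1 * sqrt x3) * θ5 = sqrt a * sqrt d * θ2 + sqrt e * sqrt x2 * θ1 :=
    (hPosCentral _ (hPosMul _ ps1 _ ps3) θ5).trans flip1c
  -- commutation facts
  have c12 : (sqrt d * sqrt (Ring.inverse (x1 * x2))) * θ1
      = θ1 * (sqrt d * sqrt (Ring.inverse (x1 * x2))) :=
    hPosCentral _ (hPosMul _ psd _ pj12) θ1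
  have c13 : (sqrt c * sqrt (Ring.inverse (b * x2))) * θ1
      = θ1 * (sqrt c * sqrt (Ring.inverse (b * x2))) :=
    hPosCentral _ (hPosMul _ psc _ pjb) θ1
  have c23 : (sqrt c * sqrt (Ring.inverse (b * x2))) * θ2
      = θ2 * (sqrt c * sqrt (Ring.inverse (b * x2))) :=
    hPosCentral _ (hPosMul _ psc _ pjb) θ2
  have L10 : x1 * (a * c) = a * c * x1 := hPosCentral x1 hx1 (a * c)
  have cb : b * (a * d) = a * d * b := hPosCentral b hbP (a * d)
  have cdb : d * b = b * d := hPosCentral d hdP b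
  have cA : x1 * (b * x3) = b * x3 * x1 := hPosCentral x1 hx1 (b * x3)
  have cB : x1 * x3 = x3 * x1 := hPosCentral x1 hx1 x3
  have cs42 : sqrt x4 * sqrt x2 = sqrt x2 * sqrt x4 := hPosCentral _ ps4 (sqrt x2)
  have h31 : sqrt x1 * θ3 = θ3 * sqrt x1 := hPosCentral _ ps1 θ3
  have h51 : sqrt x1 * θ5 = θ5 * sqrt x1 := hPosCentral _ ps1 θ5
  have c31 : sqrt x3 * sqrt x1 = sqrt x1 * sqrt x3 := hPosCentral _ ps3 (sqrt x1)
  have c211 : (sqrt x2 * sqrt x1) * θ1 = θ1 * (sqrt x2 * sqrt x1) :=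
    hPosCentral _ (hPosMul _ ps2 _ ps1) θ1
  have c212 : (sqrt x2 * sqrt x1) * θ2 = θ2 * (sqrt x2 * sqrt x1) :=
    hPosCentral _ (hPosMul _ ps2 _ ps1) θ2
  have c213 : (sqrt x2 * sqrt x1) * θ3 = θ3 * (sqrt x2 * sqrt x1) :=
    hPosCentral _ (hPosMul _ ps2 _ ps1) θ3
  -- scalar identities, proved in the (commutative) center of A
  have L1 : x1 * (sqrt a * sqrt c * sqrt b * sqrt x3)
      = sqrt a * sqrt b * sqrt c * sqrt x1 * (sqrt x1 * sqrt x3) :=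
    congrArg Subtype.val (pent_aux1 (R := Subring.center A)
      ⟨x1, memC _ hx1⟩ ⟨sqrt a, memC _ psa⟩ ⟨sqrt b, memC _ psb⟩ ⟨sqrt c, memC _ psc⟩
      ⟨sqrt x1, memC _ ps1⟩ ⟨sqrt x3, memC _ ps3⟩ (Subtype.ext (hsqrtSq x1 hx1)))
  have L3 : x1 * x2 * ((a * c * x1 + a * b * d + b * e * x2) * Ring.inverse (x1 * x2))
      = a * c * x1 + a * b * d + b * e * x2 :=
    congrArg Subtype.val (pent_aux3 (R := Subring.center A)
      ⟨a, memC _ haP⟩ ⟨b, memC _ hbP⟩ ⟨c, memC _ hcP⟩ ⟨d, memC _ hdP⟩ ⟨e, memC _ heP⟩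
      ⟨x1, memC _ hx1⟩ ⟨x2, memC _ hx2⟩ ⟨Ring.inverse (x1 * x2), memC _ hi12⟩
      (Subtype.ext riA))
  have L4 : x1 * x2 * (a * b * ((sqrt e * sqrt (Ring.inverse (a * x1)))
        * (sqrt d * sqrt (Ring.inverse (x1 * x2)))))
      = b * (sqrt a * sqrt d * sqrt e * sqrt x2) :=
    congrArg Subtype.val (pent_aux4 (R := Subring.center A)
      ⟨a, memC _ haP⟩ ⟨b, memC _ hbP⟩ ⟨x1, memC _ hx1⟩ ⟨x2, memC _ hx2⟩
      ⟨sqrt a, memC _ psa⟩ ⟨sqrt d, memC _ psd⟩ ⟨sqrt e, memC _ pse⟩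
      ⟨sqrt x1, memC _ ps1⟩ ⟨sqrt x2, memC _ ps2⟩
      ⟨sqrt (Ring.inverse (a * x1)), memC _ pja⟩ ⟨sqrt (Ring.inverse (x1 * x2)), memC _ pj12⟩
      (Subtype.ext (hsqrtSq a haP)) (Subtype.ext (hsqrtSq x1 hx1))
      (Subtype.ext (hsqrtSq x2 hx2)) (Subtype.ext rjaA) (Subtype.ext rj12A))
  have L5 : x1 * x2 * (a * b * ((sqrt e * sqrt (Ring.inverse (a * x1)))
        * (sqrt c * sqrt (Ring.inverse (b * x2)))))
      = sqrt a * sqrt b * sqrt c * sqrt x1 * (sqrt e * sqrt x2) :=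
    congrArg Subtype.val (pent_aux5 (R := Subring.center A)
      ⟨a, memC _ haP⟩ ⟨b, memC _ hbP⟩ ⟨x1, memC _ hx1⟩ ⟨x2, memC _ hx2⟩
      ⟨sqrt a, memC _ psa⟩ ⟨sqrt b, memC _ psb⟩ ⟨sqrt c, memC _ psc⟩ ⟨sqrt e, memC _ pse⟩
      ⟨sqrt x1, memC _ ps1⟩ ⟨sqrt x2, memC _ ps2⟩
      ⟨sqrt (Ring.inverse (a * x1)), memC _ pja⟩ ⟨sqrt (Ring.inverse (b * x2)), memC _ pjb⟩
      (Subtype.ext (hsqrtSq a haP)) (Subtype.ext (hsqrtSq b hbP))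
      (Subtype.ext (hsqrtSq x1 hx1)) (Subtype.ext (hsqrtSq x2 hx2))
      (Subtype.ext rjaA) (Subtype.ext rjbA))
  have L6 : x1 * x2 * (a * b * ((sqrt d * sqrt (Ring.inverse (x1 * x2)))
        * (sqrt c * sqrt (Ring.inverse (b * x2)))))
      = sqrt a * sqrt b * sqrt c * sqrt x1 * (sqrt a * sqrt d) :=
    congrArg Subtype.val (pent_aux6 (R := Subring.center A)
      ⟨a, memC _ haP⟩ ⟨b, memC _ hbP⟩ ⟨x1, memC _ hx1⟩ ⟨x2, memC _ hx2⟩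
      ⟨sqrt a, memC _ psa⟩ ⟨sqrt b, memC _ psb⟩ ⟨sqrt c, memC _ psc⟩ ⟨sqrt d, memC _ psd⟩
      ⟨sqrt x1, memC _ ps1⟩ ⟨sqrt x2, memC _ ps2⟩
      ⟨sqrt (Ring.inverse (x1 * x2)), memC _ pj12⟩ ⟨sqrt (Ring.inverse (b * x2)), memC _ pjb⟩
      (Subtype.ext (hsqrtSq a haP)) (Subtype.ext (hsqrtSq b hbP))
      (Subtype.ext (hsqrtSq x1 hx1)) (Subtype.ext (hsqrtSq x2 hx2))
      (Subtype.ext rj12A) (Subtype.ext rjbA))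
  have L7 : (sqrt a * sqrt b * (sqrt e * sqrt (Ring.inverse (a * x1)))) * (sqrt x2 * sqrt x1)
      = sqrt b * (sqrt e * sqrt x2) :=
    congrArg Subtype.val (pent_aux7 (R := Subring.center A)
      ⟨sqrt a, memC _ psa⟩ ⟨sqrt b, memC _ psb⟩ ⟨sqrt e, memC _ pse⟩
      ⟨sqrt x1, memC _ ps1⟩ ⟨sqrt x2, memC _ ps2⟩
      ⟨sqrt (Ring.inverse (a * x1)), memC _ pja⟩ (Subtype.ext rjaA))
  have L8 : (sqrt a * sqrt b * (sqrt d * sqrt (Ring.inverse (x1 * x2)))) * (sqrt x2 * sqrt x1)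
      = sqrt b * (sqrt a * sqrt d) :=
    congrArg Subtype.val (pent_aux8 (R := Subring.center A)
      ⟨sqrt a, memC _ psa⟩ ⟨sqrt b, memC _ psb⟩ ⟨sqrt d, memC _ psd⟩
      ⟨sqrt x1, memC _ ps1⟩ ⟨sqrt x2, memC _ ps2⟩
      ⟨sqrt (Ring.inverse (x1 * x2)), memC _ pj12⟩ (Subtype.ext rj12A))
  have L9 : (sqrt a * sqrt b * (sqrt c * sqrt (Ring.inverse (b * x2)))) * (sqrt x2 * sqrt x1)
      = sqrt a * sqrt c * sqrt x1 :=
    congrArg Subtype.val (pent_aux9 (R := Subring.center A)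
      ⟨sqrt a, memC _ psa⟩ ⟨sqrt b, memC _ psb⟩ ⟨sqrt c, memC _ psc⟩
      ⟨sqrt x1, memC _ ps1⟩ ⟨sqrt x2, memC _ ps2⟩
      ⟨sqrt (Ring.inverse (b * x2)), memC _ pjb⟩ (Subtype.ext rjbA))
  constructor
  · rw [A10, A11, A12]
    refine (hPosUnit _ h12P).mul_left_cancel ?_
    linear_combination (norm := noncomm_ring)
      x1 * flip2a + cA - b * cB + b * flip1a + L10 + cb + a * cdb
      + L1 * (θ5 * θ3)
      + (sqrt a * sqrt b * sqrt c * sqrt x1) * (q5 * θ3)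
      - L3
      + ((x1 * x2) * (a * b) * (sqrt e * sqrt (Ring.inverse (a * x1)))) * (c12 * θ2)
      - L4 * (θ1 * θ2)
      + ((x1 * x2) * (a * b) * (sqrt e * sqrt (Ring.inverse (a * x1)))) * (c13 * θ3)
      - L5 * (θ1 * θ3)
      + ((x1 * x2) * (a * b) * (sqrt d * sqrt (Ring.inverse (x1 * x2)))) * (c23 * θ3)
      - L6 * (θ2 * θ3)
  · rw [A9, A10, A11, A12]
    refine (hPosUnit _ (hPosMul _ ps2 _ ps1)).mul_right_cancel ?_
    linear_combination (norm := noncomm_ring)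
      θ6 * (cs42 * sqrt x1) + flip2b * sqrt x1
      - (sqrt a * sqrt c) * h31 - (sqrt b * sqrt x3) * h51
      + sqrt b * (c31 * θ5) + sqrt b * q5
      + ((sqrt a * sqrt b) * (sqrt e * sqrt (Ring.inverse (a * x1)))) * c211 - L7 * θ1
      + ((sqrt a * sqrt b) * (sqrt d * sqrt (Ring.inverse (x1 * x2)))) * c212 - L8 * θ2
      + ((sqrt a * sqrt b) * (sqrt c * sqrt (Ring.inverse (b * x2)))) * c213 - L9 * θ3
end
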